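/- arXiv:2409.16233 — 9 statements merged into one kernel-verified Lean document; each statement's English description precedes it below -/
import Mathlib

section
/- Let A and B be sets of positive integers with Shnirel'man densities σ(A) and σ(B). If σ(A) + σ(B) ≥ 1, then A + B = ℕ₀, i.e., every nonnegative integer is a sum a + b with a ∈ A ∪ {0} and b ∈ B ∪ {0}. -/
/-!
If `n > 0` is not in `A + B`, then `a ↦ a` on `A ∩ [1, n]` and `b ↦ n - b` on `B ∩ [1, n]` are
injections into `[1, n - 1]` with disjoint images, so `A(n) + B(n) ≤ n - 1`. On the other hand
`A(n) + B(n) ≥ n (σ(A) + σ(B)) ≥ n`.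
-/

/-- The Shnirel'man density of a set of positive integers:
`σ(A) = inf { A(n)/n : n ∈ ℕ, n ≥ 1 }` where `A(n) = #{a ∈ A : 1 ≤ a ≤ n}`. -/
noncomputable def shnirelmanDensity (A : Set ℕ) : ℝ :=
  sInf {r : ℝ | ∃ n : ℕ, 0 < n ∧ r = ((A ∩ Set.Icc 1 n).ncard : ℝ) / (n : ℝ)}

/-- The sumset `A + B = {a + b : a ∈ A ∪ {0}, b ∈ B ∪ {0}}`. -/
def sumset (A B : Set ℕ) : Set ℕ :=
  {n | ∃ a ∈ A ∪ {0}, ∃ b ∈ B ∪ {0}, a + b = n}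

theorem mul_shnirelmanDensity_le_ncard (A : Set ℕ) {n : ℕ} (hn : 0 < n) :
    n * shnirelmanDensity A ≤ (A ∩ Set.Icc 1 n).ncard := by
  have hle : shnirelmanDensity A ≤ (A ∩ Set.Icc 1 n).ncard / n :=
    csInf_le ⟨0, fun r ⟨m, _, hr⟩ => hr ▸ by positivity⟩ ⟨n, hn, rfl⟩
  rwa [le_div_iff₀ (by exact_mod_cast hn), mul_comm] at hle

theorem zero_mem_sumset (A B : Set ℕ) : 0 ∈ sumset A B :=
  ⟨0, Or.inr rfl, 0, Or.inr rfl, rfl⟩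

theorem ncard_add_ncard_lt_of_notMem_sumset {A B : Set ℕ} {n : ℕ} (hn : 0 < n)
    (hns : n ∉ sumset A B) :
    (A ∩ Set.Icc 1 n).ncard + (B ∩ Set.Icc 1 n).ncard < n := by
  set S := A ∩ Set.Icc 1 n
  set T := (n - ·) '' (B ∩ Set.Icc 1 n)
  have hnA : n ∉ A := fun h => hns ⟨n, Or.inl h, 0, Or.inr rfl, rfl⟩
  have hnB : n ∉ B := fun h => hns ⟨0, Or.inr rfl, n, Or.inl h, zero_add n⟩
  have hinj : Set.InjOn (n - ·) (B ∩ Set.Icc 1 n) := by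
    rintro x ⟨-, -, hx⟩ y ⟨-, -, hy⟩ hxy
    simp only at hxy
    omega
  have hdisj : Disjoint S T := by
    rw [Set.disjoint_left]
    rintro a ⟨ha, -⟩ ⟨b, ⟨hb, -, hbn⟩, rfl⟩
    exact hns ⟨n - b, Or.inl ha, b, Or.inl hb, Nat.sub_add_cancel hbn⟩
  have hsub : S ∪ T ⊆ Set.Ico 1 n := by
    rintro x (⟨hx, hx1, hxn⟩ | ⟨b, ⟨hb, hb1, hbn⟩, rfl⟩)
    · exact ⟨hx1, lt_of_le_of_ne hxn (by rintro rfl; exact hnA hx)⟩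
    · have : b ≠ n := by rintro rfl; exact hnB hb
      simp only [Set.mem_Ico]
      omega
  calc S.ncard + (B ∩ Set.Icc 1 n).ncard
      = (S ∪ T).ncard := by
        rw [Set.ncard_union_eq hdisj ((Set.finite_Icc 1 n).inter_of_right A)
          (((Set.finite_Icc 1 n).inter_of_right B).image _), hinj.ncard_image]
    _ ≤ (Set.Ico 1 n).ncard := Set.ncard_le_ncard hsub (Set.finite_Ico 1 n)
    _ < n := by rw [Set.ncard_eq_toFinset_card', Set.toFinset_Ico, Nat.card_Ico]; omega

theorem sumset_eq_univ_of_one_le_add_density_general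
    (A B : Set ℕ)
    (h : 1 ≤ shnirelmanDensity A + shnirelmanDensity B) :
    sumset A B = Set.univ := by
  refine Set.eq_univ_of_forall fun n => ?_
  rcases Nat.eq_zero_or_pos n with rfl | hn
  · exact zero_mem_sumset A B
  by_contra hns
  have hlt : ((A ∩ Set.Icc 1 n).ncard + (B ∩ Set.Icc 1 n).ncard : ℝ) < n := by
    exact_mod_cast ncard_add_ncard_lt_of_notMem_sumset hn hns
  have hA := mul_shnirelmanDensity_le_ncard A hn
  have hB := mul_shnirelmanDensity_le_ncard B hn
  have hn_le : (n : ℝ) ≤ n * (shnirelmanDensity A + shnirelmanDensity B) := by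
    simpa using mul_le_mul_of_nonneg_left h n.cast_nonneg
  linarith

/-- If `A` and `B` are sets of positive integers with `σ(A) + σ(B) ≥ 1`,
then `A + B = ℕ₀`. -/
theorem sumset_eq_univ_of_one_le_add_density
    (A B : Set ℕ) (hA : A ⊆ {n | 0 < n}) (hB : B ⊆ {n | 0 < n})
    (h : 1 ≤ shnirelmanDensity A + shnirelmanDensity B) :
    sumset A B = Set.univ :=
  sumset_eq_univ_of_one_le_add_density_general A B h
end

section
/- (Shnirel'man's inequality) Let A and B be sets of positive integers with Shnirel'man densities σ(A) = α and σ(B) = β. Then σ(A + B) ≥ α + β − αβ. -/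
open scoped Classical

noncomputable def cntShn (A : Set ℕ) (n : ℕ) : ℕ :=
  ((Finset.Icc 1 n).filter (· ∈ A)).card

lemma ncard_inter_Icc (A : Set ℕ) (n : ℕ) :
    (A ∩ Set.Icc 1 n).ncard = cntShn A n := by
  unfold cntShn
  rw [← Set.ncard_coe_finset]
  congr 1
  ext m
  simp only [Set.mem_inter_iff, Set.mem_Icc, Finset.coe_filter, Finset.mem_Icc,
    Set.mem_setOf_eq]
  tauto

lemma mem_densitySet (A : Set ℕ) {n : ℕ} (hn : 0 < n) :
    ((cntShn A n : ℝ) / n) ∈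
      {r : ℝ | ∃ n : ℕ, 0 < n ∧ r = ((A ∩ Set.Icc 1 n).ncard : ℝ) / (n : ℝ)} := by
  exact ⟨n, hn, by rw [ncard_inter_Icc]⟩

lemma densitySet_bddBelow (A : Set ℕ) :
    BddBelow {r : ℝ | ∃ n : ℕ, 0 < n ∧ r = ((A ∩ Set.Icc 1 n).ncard : ℝ) / (n : ℝ)} := by
  refine ⟨0, ?_⟩
  rintro r ⟨m, hm, rfl⟩
  positivity

lemma density_le_cnt (A : Set ℕ) {n : ℕ} (hn : 0 < n) :
    shnirelmanDensity A ≤ (cntShn A n : ℝ) / n :=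
  csInf_le (densitySet_bddBelow A) (mem_densitySet A hn)

lemma density_mul_le (A : Set ℕ) {n : ℕ} (hn : 0 < n) :
    shnirelmanDensity A * n ≤ (cntShn A n : ℝ) := by
  have h := density_le_cnt A hn
  have hn' : (0 : ℝ) < n := by exact_mod_cast hn
  rw [le_div_iff₀ hn'] at h
  exact h

lemma density_le_one (B : Set ℕ) : shnirelmanDensity B ≤ 1 := by
  have h := density_le_cnt B (n := 1) one_pos
  have h1 : cntShn B 1 ≤ 1 := by
    have := Finset.card_filter_le (Finset.Icc 1 1) (· ∈ B)
    simpa [cntShn] using this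
  refine h.trans ?_
  rw [Nat.cast_one, div_one]
  exact_mod_cast h1

/-- The largest element of `A ∪ {0}` that is `≤ m`. -/
noncomputable def prevA (A : Set ℕ) (m : ℕ) : ℕ :=
  ((Finset.range (m+1)).filter (fun a => a ∈ A ∨ a = 0)).max' ⟨0, by simp⟩

lemma prevA_spec (A : Set ℕ) (m : ℕ) :
    prevA A m ≤ m ∧ (prevA A m ∈ A ∨ prevA A m = 0) := by
  have h : prevA A m ∈ (Finset.range (m+1)).filter (fun a => a ∈ A ∨ a = 0) :=
    Finset.max'_mem _ _
  rw [Finset.mem_filter, Finset.mem_range] at h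
  exact ⟨by omega, h.2⟩

lemma le_prevA (A : Set ℕ) {a m : ℕ} (ha : a ∈ A ∨ a = 0) (ham : a ≤ m) :
    a ≤ prevA A m :=
  Finset.le_max' _ a (by rw [Finset.mem_filter, Finset.mem_range]; exact ⟨by omega, ha⟩)

lemma prevA_eq_of_between (A : Set ℕ) {m m' : ℕ} (h1 : m' ≤ m)
    (h2 : prevA A m ≤ m') : prevA A m' = prevA A m := by
  have hs := prevA_spec A m
  have hs' := prevA_spec A m'
  exact le_antisymm (le_prevA A hs'.2 (le_trans hs'.1 h1)) (le_prevA A hs.2 h2)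

lemma key_count (A B : Set ℕ) (n : ℕ) (hn : 0 < n) :
    (cntShn A n : ℝ) + shnirelmanDensity B * ((n : ℝ) - cntShn A n)
      ≤ (cntShn (sumset A B) n : ℝ) := by
  set β := shnirelmanDensity B with hβdef
  set I := Finset.Icc 1 n with hI
  set A' := I.filter (· ∈ A) with hA'
  set D := I.filter (fun m => m ∉ A) with hD
  set T := D.filter (fun m => m - prevA A m ∈ B) with hT
  have hTD : T ⊆ D := Finset.filter_subset _ _
  -- card D = n - card A'
  have hsplit : A'.card + D.card = n := by
    rw [hA', hD, Finset.card_filter_add_card_filter_not, hI, Nat.card_Icc]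
    omega
  -- Step 1: A' ∪ T ⊆ sumset-filter, disjoint
  have hsub : A' ∪ T ⊆ I.filter (· ∈ sumset A B) := by
    intro m hm
    rw [Finset.mem_union] at hm
    rcases hm with hm | hm
    · rw [hA', Finset.mem_filter] at hm
      rw [Finset.mem_filter]
      exact ⟨hm.1, ⟨m, Or.inl hm.2, 0, Or.inr rfl, by omega⟩⟩
    · have hmD := hTD hm
      rw [hT, Finset.mem_filter] at hm
      rw [hD, Finset.mem_filter] at hmD
      rw [Finset.mem_filter]
      have hps := prevA_spec A m
      refine ⟨hmD.1, ⟨prevA A m, ?_, m - prevA A m, Or.inl hm.2, by omega⟩⟩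
      rcases hps.2 with h | h
      · exact Or.inl h
      · exact Or.inr h
  have hdisj : Disjoint A' T := by
    rw [Finset.disjoint_left]
    intro m hm hm'
    rw [hA', Finset.mem_filter] at hm
    have := hTD hm'
    rw [hD, Finset.mem_filter] at this
    exact this.2 hm.2
  have h1 : A'.card + T.card ≤ cntShn (sumset A B) n := by
    rw [← Finset.card_union_of_disjoint hdisj]
    exact Finset.card_le_card hsub
  -- Step 2: β * D.card ≤ T.card
  have h2 : β * (D.card : ℝ) ≤ (T.card : ℝ) := by
    set t := D.image (prevA A) with ht
    have hDfib : D.card = ∑ a ∈ t, (D.filter (fun m => prevA A m = a)).card :=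
      Finset.card_eq_sum_card_fiberwise (fun x hx => Finset.mem_image_of_mem _ hx)
    have hTfib : T.card = ∑ a ∈ t, (T.filter (fun m => prevA A m = a)).card :=
      Finset.card_eq_sum_card_fiberwise (fun x hx => Finset.mem_image_of_mem _ (hTD hx))
    have hfib : ∀ a ∈ t, β * ((D.filter (fun m => prevA A m = a)).card : ℝ)
        ≤ ((T.filter (fun m => prevA A m = a)).card : ℝ) := by
      intro a ha
      set Da := D.filter (fun m => prevA A m = a) with hDa
      obtain ⟨m0, hm0D, hm0⟩ := Finset.mem_image.mp ha
      have hDane : Da.Nonempty := ⟨m0, by rw [hDa, Finset.mem_filter]; exact ⟨hm0D, hm0⟩⟩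
      set M := Da.max' hDane with hM
      have hMmem : M ∈ Da := Finset.max'_mem _ _
      have hMfacts : M ∈ Finset.Icc 1 n ∧ M ∉ A ∧ prevA A M = a := by
        have := hMmem
        rw [hDa, Finset.mem_filter, hD, Finset.mem_filter] at this
        exact ⟨this.1.1, this.1.2, this.2⟩
      have hMIcc := Finset.mem_Icc.mp hMfacts.1
      have haM : a < M := by
        have hle : a ≤ M := hMfacts.2.2 ▸ (prevA_spec A M).1
        rcases eq_or_lt_of_le hle with h | h
        · exfalso
          have : prevA A M = M := h ▸ hMfacts.2.2
          rcases (prevA_spec A M).2 with hh | hh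
          · exact hMfacts.2.1 (this ▸ hh)
          · omega
        · exact h
      -- Da is an interval
      have hInt : Da = Finset.Icc (a+1) M := by
        apply Finset.Subset.antisymm
        · intro m hm
          have hmm := hm
          rw [hDa, Finset.mem_filter, hD, Finset.mem_filter, Finset.mem_Icc] at hmm
          rw [Finset.mem_Icc]
          have hle : a ≤ m := hmm.2 ▸ (prevA_spec A m).1
          have hne : a ≠ m := by
            intro h
            have : prevA A m = m := h ▸ hmm.2
            rcases (prevA_spec A m).2 with hh | hh
            · exact hmm.1.2 (this ▸ hh)
            · omega
          exact ⟨by omega, Finset.le_max' _ m hm⟩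
        · intro m hm
          rw [Finset.mem_Icc] at hm
          have hprev : prevA A m = a := by
            rw [← hMfacts.2.2]
            have := prevA_eq_of_between A (m := M) (m' := m) hm.2
              (by rw [hMfacts.2.2]; omega)
            rw [this]
          have hmA : m ∉ A := by
            intro hcon
            have := le_prevA A (Or.inl hcon) hm.2
            rw [hMfacts.2.2] at this
            omega
          rw [hDa, Finset.mem_filter, hD, Finset.mem_filter, Finset.mem_Icc]
          exact ⟨⟨⟨by omega, le_trans hm.2 hMIcc.2⟩, hmA⟩, hprev⟩
      set L := M - a with hL
      have hLpos : 0 < L := by omega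
      have hDacard : Da.card = L := by rw [hInt, Nat.card_Icc]; omega
      -- the T-fiber is a shifted copy of B ∩ [1, L]
      have hTa : T.filter (fun m => prevA A m = a)
          = ((Finset.Icc 1 L).filter (· ∈ B)).image (fun g => a + g) := by
        ext m
        constructor
        · intro hm
          rw [Finset.mem_filter, hT, Finset.mem_filter] at hm
          have hmDa : m ∈ Da := by
            rw [hDa, Finset.mem_filter]; exact ⟨hm.1.1, hm.2⟩
          rw [hInt, Finset.mem_Icc] at hmDa
          rw [Finset.mem_image]
          refine ⟨m - a, ?_, by omega⟩
          rw [Finset.mem_filter, Finset.mem_Icc]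
          have : m - prevA A m = m - a := by rw [hm.2]
          exact ⟨⟨by omega, by omega⟩, this ▸ hm.1.2⟩
        · intro hm
          rw [Finset.mem_image] at hm
          obtain ⟨g, hg, rfl⟩ := hm
          rw [Finset.mem_filter, Finset.mem_Icc] at hg
          have hmDa : a + g ∈ Da := by
            rw [hInt, Finset.mem_Icc]; omega
          have hmDa' := hmDa
          rw [hDa, Finset.mem_filter] at hmDa'
          rw [Finset.mem_filter, hT, Finset.mem_filter]
          refine ⟨⟨hmDa'.1, ?_⟩, hmDa'.2⟩
          have : a + g - prevA A (a + g) = g := by rw [hmDa'.2]; omega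
          rw [this]
          exact hg.2
      have hcardTa : (T.filter (fun m => prevA A m = a)).card = cntShn B L := by
        rw [hTa, Finset.card_image_of_injective _ (fun x y h => by omega), cntShn]
      rw [hcardTa, hDacard]
      exact density_mul_le B hLpos
    calc β * (D.card : ℝ) = ∑ a ∈ t, β * ((D.filter (fun m => prevA A m = a)).card : ℝ) := by
          rw [← Finset.mul_sum, hDfib]; push_cast; ring
      _ ≤ ∑ a ∈ t, ((T.filter (fun m => prevA A m = a)).card : ℝ) :=
          Finset.sum_le_sum hfib
      _ = (T.card : ℝ) := by rw [hTfib]; push_cast; ring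
  -- assemble
  have hA'card : (A'.card : ℝ) = (cntShn A n : ℝ) := by rw [hA', cntShn, hI]
  have hDcard : (D.card : ℝ) = (n : ℝ) - (cntShn A n : ℝ) := by
    have : (A'.card : ℝ) + (D.card : ℝ) = (n : ℝ) := by exact_mod_cast hsplit
    linarith [hA'card]
  have h1' : (A'.card : ℝ) + (T.card : ℝ) ≤ (cntShn (sumset A B) n : ℝ) := by
    exact_mod_cast h1
  rw [← hA'card]
  calc (A'.card : ℝ) + β * ((n : ℝ) - cntShn A n)
      = (A'.card : ℝ) + β * (D.card : ℝ) := by rw [hDcard]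
    _ ≤ (A'.card : ℝ) + (T.card : ℝ) := by linarith
    _ ≤ _ := h1'

/-- Shnirel'man's inequality: `σ(A + B) ≥ α + β - αβ`. -/
theorem shnirelman_inequality
    (A B : Set ℕ) (hA : A ⊆ {n | 0 < n}) (hB : B ⊆ {n | 0 < n})
    (α β : ℝ) (hα : shnirelmanDensity A = α) (hβ : shnirelmanDensity B = β) :
    shnirelmanDensity (sumset A B) ≥ α + β - α * β := by
  subst hα
  subst hβ
  set α := shnirelmanDensity A with hαd
  set β := shnirelmanDensity B with hβd
  rw [ge_iff_le, shnirelmanDensity]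
  apply le_csInf
  · exact ⟨_, 1, one_pos, rfl⟩
  · rintro r ⟨n, hn, rfl⟩
    rw [ncard_inter_Icc]
    have hn' : (0 : ℝ) < n := by exact_mod_cast hn
    rw [le_div_iff₀ hn']
    have h1 := key_count A B n hn
    have h2 := density_mul_le A hn
    have h3 := density_le_one B
    calc (α + β - α * β) * n = α * n * (1 - β) + β * n := by ring
      _ ≤ (cntShn A n : ℝ) * (1 - β) + β * n := by
          have := mul_le_mul_of_nonneg_right h2 (by linarith : (0:ℝ) ≤ 1 - β)
          linarith
      _ = (cntShn A n : ℝ) + β * ((n : ℝ) - cntShn A n) := by ring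
      _ ≤ (cntShn (sumset A B) n : ℝ) := h1
end

section
/- Let h ≥ 1 and let A₁, …, A_h be sets of positive integers with Shnirel'man densities σ(A_i) = α_i for all i ∈ {1, …, h}. Then 1 − σ(A₁ + ⋯ + A_h) ≤ ∏_{i=1}^h (1 − α_i). -/
/-- The sum `A₁ + ⋯ + A_h = {a₁ + ⋯ + a_h : aᵢ ∈ Aᵢ ∪ {0}}` of a family of sets. -/
def sumsetFam {h : ℕ} (A : Fin h → Set ℕ) : Set ℕ :=
  {n | ∃ f : Fin h → ℕ, (∀ i, f i ∈ A i ∪ {0}) ∧ ∑ i, f i = n}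

open Classical

/-- counting function -/
noncomputable def cnt (A : Set ℕ) (n : ℕ) : ℕ :=
  ((Finset.Icc 1 n).filter (· ∈ A)).card

lemma cnt_def (A : Set ℕ) (n : ℕ) : cnt A n = ((Finset.Icc 1 n).filter (· ∈ A)).card := rfl

lemma ncard_eq_cnt (A : Set ℕ) (n : ℕ) :
    (A ∩ Set.Icc 1 n).ncard = cnt A n := by
  rw [cnt, ← Set.ncard_coe_finset]
  congr 1
  ext m
  simp only [Finset.coe_filter, Finset.mem_Icc, Set.mem_inter_iff, Set.mem_Icc, Set.mem_setOf_eq]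
  tauto

lemma sd_eq (A : Set ℕ) :
    shnirelmanDensity A = sInf {r : ℝ | ∃ n : ℕ, 0 < n ∧ r = (cnt A n : ℝ) / (n : ℝ)} := by
  unfold shnirelmanDensity
  congr 1
  ext r
  simp_rw [ncard_eq_cnt]

lemma sd_le (A : Set ℕ) {n : ℕ} (hn : 0 < n) :
    shnirelmanDensity A ≤ (cnt A n : ℝ) / n := by
  rw [sd_eq]
  exact csInf_le ⟨0, by rintro r ⟨m, hm, rfl⟩; positivity⟩ ⟨n, hn, rfl⟩

lemma sd_nonneg (A : Set ℕ) : 0 ≤ shnirelmanDensity A := by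
  rw [sd_eq]
  refine le_csInf ⟨(cnt A 1 : ℝ)/(1:ℕ), 1, one_pos, rfl⟩ ?_
  rintro r ⟨m, hm, rfl⟩
  positivity

lemma cnt_le (A : Set ℕ) (n : ℕ) : cnt A n ≤ n := by
  calc cnt A n ≤ (Finset.Icc 1 n).card := Finset.card_filter_le _ _
  _ = n := by rw [Nat.card_Icc]; omega

lemma sd_le_one (A : Set ℕ) : shnirelmanDensity A ≤ 1 := by
  have h1 := sd_le A one_pos
  have h2 : (cnt A 1 : ℝ) ≤ 1 := by exact_mod_cast cnt_le A 1
  rw [Nat.cast_one, div_one] at h1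
  linarith

lemma sd_mul_le (A : Set ℕ) (n : ℕ) : shnirelmanDensity A * n ≤ (cnt A n : ℝ) := by
  rcases Nat.eq_zero_or_pos n with rfl | hn
  · simp
  · have h := sd_le A hn
    have hn' : (0 : ℝ) < n := by exact_mod_cast hn
    rw [le_div_iff₀ hn'] at h
    exact h

lemma sd_ge (S : Set ℕ) {c : ℝ} (hc : ∀ n : ℕ, 0 < n → c * n ≤ (cnt S n : ℝ)) :
    c ≤ shnirelmanDensity S := by
  rw [sd_eq]
  refine le_csInf ⟨(cnt S 1 : ℝ)/(1:ℕ), 1, one_pos, rfl⟩ ?_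
  rintro r ⟨n, hn, rfl⟩
  have hn' : (0 : ℝ) < n := by exact_mod_cast hn
  rw [le_div_iff₀ hn']
  exact hc n hn

lemma cnt_mono_set {A B : Set ℕ} (h : ∀ x ∈ A, x ∈ B) (n : ℕ) : cnt A n ≤ cnt B n := by
  apply Finset.card_le_card
  intro x hx
  simp only [Finset.mem_filter] at *
  exact ⟨hx.1, h x hx.2⟩

lemma core (A B S : Set ℕ) (hAS : ∀ a ∈ A, a ∈ S) (hBS : ∀ b ∈ B, b ∈ S)
    (hsum : ∀ a ∈ A, ∀ b ∈ B, a + b ∈ S) {β : ℝ}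
    (hβ : ∀ m : ℕ, β * m ≤ (cnt B m : ℝ)) :
    ∀ n : ℕ, (cnt A n : ℝ) + β * ((n : ℝ) - (cnt A n : ℝ)) ≤ (cnt S n : ℝ) := by
  intro n
  induction n using Nat.strong_induction_on with
  | _ n IH =>
  by_cases hne : ((Finset.Icc 1 n).filter (· ∈ A)).Nonempty
  · set a := ((Finset.Icc 1 n).filter (· ∈ A)).max' hne with ha_def
    have haF : a ∈ (Finset.Icc 1 n).filter (· ∈ A) := Finset.max'_mem _ hne
    simp only [Finset.mem_filter, Finset.mem_Icc] at haF
    obtain ⟨⟨ha1, han⟩, haA⟩ := haF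
    -- cnt A n = cnt A (a-1) + 1
    have hA_eq : cnt A n = cnt A (a-1) + 1 := by
      have heq : (Finset.Icc 1 n).filter (· ∈ A)
          = insert a ((Finset.Icc 1 (a-1)).filter (· ∈ A)) := by
        ext m
        simp only [Finset.mem_filter, Finset.mem_insert, Finset.mem_Icc]
        constructor
        · rintro ⟨⟨h1, h2⟩, hm⟩
          have hle : m ≤ a := Finset.le_max' _ m
            (by simp only [Finset.mem_filter, Finset.mem_Icc]; exact ⟨⟨h1, h2⟩, hm⟩)
          rcases eq_or_lt_of_le hle with rfl | hlt
          · left; rfl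
          · right; exact ⟨⟨h1, by omega⟩, hm⟩
        · rintro (rfl | ⟨⟨h1, h2⟩, hm⟩)
          · exact ⟨⟨ha1, han⟩, haA⟩
          · exact ⟨⟨h1, by omega⟩, hm⟩
      rw [cnt_def, heq, Finset.card_insert_of_notMem, ← cnt_def]
      simp only [Finset.mem_filter, Finset.mem_Icc]
      rintro ⟨⟨_, h2⟩, _⟩
      omega
    -- card lower bound
    have hcard : cnt S (a-1) + 1 + cnt B (n-a) ≤ cnt S n := by
      have hsub : ((Finset.Icc 1 (a-1)).filter (· ∈ S)) ∪
          insert a (((Finset.Icc 1 (n-a)).filter (· ∈ B)).image (a + ·))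
          ⊆ (Finset.Icc 1 n).filter (· ∈ S) := by
        intro m hm
        simp only [Finset.mem_union, Finset.mem_insert, Finset.mem_image, Finset.mem_filter,
          Finset.mem_Icc] at hm ⊢
        rcases hm with ⟨⟨h1, h2⟩, hm⟩ | rfl | ⟨b, ⟨⟨hb1, hb2⟩, hbB⟩, rfl⟩
        · exact ⟨⟨h1, by omega⟩, hm⟩
        · exact ⟨⟨ha1, han⟩, hAS a haA⟩
        · exact ⟨⟨by omega, by omega⟩, hsum a haA b hbB⟩
      have hd1 : Disjoint ((Finset.Icc 1 (a-1)).filter (· ∈ S))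
          (insert a (((Finset.Icc 1 (n-a)).filter (· ∈ B)).image (a + ·))) := by
        rw [Finset.disjoint_left]
        intro m hm hm'
        simp only [Finset.mem_filter, Finset.mem_Icc] at hm
        simp only [Finset.mem_insert, Finset.mem_image, Finset.mem_filter, Finset.mem_Icc] at hm'
        rcases hm' with rfl | ⟨b, ⟨⟨hb1, _⟩, _⟩, rfl⟩ <;> omega
      have hd2 : a ∉ ((Finset.Icc 1 (n-a)).filter (· ∈ B)).image (a + ·) := by
        simp only [Finset.mem_image, Finset.mem_filter, Finset.mem_Icc]
        rintro ⟨b, ⟨⟨hb1, _⟩, _⟩, hab⟩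
        omega
      have himg : (((Finset.Icc 1 (n-a)).filter (· ∈ B)).image (a + ·)).card = cnt B (n-a) :=
        Finset.card_image_of_injective _ (add_right_injective a)
      have hcc := Finset.card_le_card hsub
      rw [Finset.card_union_of_disjoint hd1, Finset.card_insert_of_notMem hd2, himg,
        ← cnt_def, ← cnt_def] at hcc
      omega
    have hltn : a - 1 < n := by omega
    have h1 := IH (a-1) hltn
    have h2 := hβ (n-a)
    have c1 : ((a-1 : ℕ) : ℝ) = (a : ℝ) - 1 := by
      rw [Nat.cast_sub ha1, Nat.cast_one]
    have c2 : ((n-a : ℕ) : ℝ) = (n : ℝ) - a := by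
      rw [Nat.cast_sub han]
    rw [c1] at h1
    rw [c2] at h2
    have c3 : (cnt A n : ℝ) = (cnt A (a-1) : ℝ) + 1 := by exact_mod_cast hA_eq
    have c4 : (cnt S (a-1) : ℝ) + 1 + (cnt B (n-a) : ℝ) ≤ (cnt S n : ℝ) := by
      exact_mod_cast hcard
    have hid : β * (((a : ℝ) - 1) - (cnt A (a-1) : ℝ)) + β * ((n : ℝ) - (a : ℝ))
        = β * ((n : ℝ) - ((cnt A (a-1) : ℝ) + 1)) := by ring
    rw [c3]
    linarith
  · have h0 : cnt A n = 0 := by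
      rw [cnt_def, Finset.not_nonempty_iff_eq_empty.mp hne, Finset.card_empty]
    rw [h0]
    have h1 := hβ n
    have h2 : (cnt B n : ℝ) ≤ (cnt S n : ℝ) := by exact_mod_cast cnt_mono_set hBS n
    push_cast
    linarith

lemma key (A B S : Set ℕ) (hAS : ∀ a ∈ A, a ∈ S) (hBS : ∀ b ∈ B, b ∈ S)
    (hsum : ∀ a ∈ A, ∀ b ∈ B, a + b ∈ S) :
    1 - shnirelmanDensity S ≤ (1 - shnirelmanDensity A) * (1 - shnirelmanDensity B) := by
  set α := shnirelmanDensity A with hα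
  set β := shnirelmanDensity B with hβ
  have hβ1 : β ≤ 1 := sd_le_one B
  have hcore := core A B S hAS hBS hsum (fun m => sd_mul_le B m)
  have hS : 1 - (1 - α) * (1 - β) ≤ shnirelmanDensity S := by
    apply sd_ge
    intro n hn
    have h1 := hcore n
    have h2 : α * n ≤ (cnt A n : ℝ) := sd_mul_le A n
    have h3 : (0 : ℝ) ≤ (1 - β) * ((cnt A n : ℝ) - α * n) :=
      mul_nonneg (by linarith) (by linarith)
    nlinarith
  nlinarith [hS]

lemma main_aux : ∀ (h : ℕ) (A : Fin h → Set ℕ),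
    1 - shnirelmanDensity (sumsetFam A) ≤ ∏ i, (1 - shnirelmanDensity (A i)) := by
  intro h
  induction h with
  | zero =>
    intro A
    have := sd_nonneg (sumsetFam A)
    simpa using this
  | succ h IH =>
    intro A
    have h1 : ∀ a ∈ A 0, a ∈ sumsetFam A := by
      intro a ha
      refine ⟨Fin.cons a 0, ?_, ?_⟩
      · intro i
        refine Fin.cases ?_ ?_ i
        · simpa using Or.inr ha
        · intro j; simp
      · rw [Fin.sum_univ_succ]; simp
    have h2 : ∀ b ∈ sumsetFam (fun i : Fin h => A i.succ), b ∈ sumsetFam A := by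
      rintro b ⟨g, hg, rfl⟩
      refine ⟨Fin.cons 0 g, ?_, ?_⟩
      · intro i
        refine Fin.cases ?_ ?_ i
        · simp
        · intro j; simpa using hg j
      · rw [Fin.sum_univ_succ]; simp
    have h3 : ∀ a ∈ A 0, ∀ b ∈ sumsetFam (fun i : Fin h => A i.succ), a + b ∈ sumsetFam A := by
      rintro a ha b ⟨g, hg, rfl⟩
      refine ⟨Fin.cons a g, ?_, ?_⟩
      · intro i
        refine Fin.cases ?_ ?_ i
        · simpa using Or.inr ha
        · intro j; simpa using hg j
      · rw [Fin.sum_univ_succ]; simp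
    have hkey := key (A 0) (sumsetFam (fun i : Fin h => A i.succ)) (sumsetFam A) h1 h2 h3
    have hIH := IH (fun i => A i.succ)
    have h0 : shnirelmanDensity (A 0) ≤ 1 := sd_le_one _
    have h0' : 0 ≤ 1 - shnirelmanDensity (A 0) := by linarith
    calc 1 - shnirelmanDensity (sumsetFam A)
        ≤ (1 - shnirelmanDensity (A 0)) *
          (1 - shnirelmanDensity (sumsetFam (fun i : Fin h => A i.succ))) := hkey
      _ ≤ (1 - shnirelmanDensity (A 0)) *
          ∏ i : Fin h, (1 - shnirelmanDensity (A i.succ)) :=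
          mul_le_mul_of_nonneg_left hIH h0'
      _ = ∏ i : Fin (h+1), (1 - shnirelmanDensity (A i)) := by rw [Fin.prod_univ_succ]

/-- For sets `A₁, …, A_h` of positive integers with `σ(Aᵢ) = αᵢ`,
`1 - σ(A₁ + ⋯ + A_h) ≤ ∏ᵢ (1 - αᵢ)`. -/
theorem one_sub_density_sumsetFam_le
    (h : ℕ) (hh : 1 ≤ h) (A : Fin h → Set ℕ) (hA : ∀ i, A i ⊆ {n | 0 < n})
    (α : Fin h → ℝ) (hα : ∀ i, shnirelmanDensity (A i) = α i) :
    1 - shnirelmanDensity (sumsetFam A) ≤ ∏ i, (1 - α i) := by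
  have := main_aux h A
  simp only [hα] at this
  exact this
end

section
/- Let A be a set of positive integers with Shnirel'man density σ(A) = α, and let h ≥ 1. Then σ(hA) ≥ 1 − (1 − α)^h, where hA is the h-fold sumset of A. -/
attribute [local instance] Classical.propDecidable

/-- The `h`-fold sumset `hA = {a₁ + ⋯ + a_h : aᵢ ∈ A ∪ {0}}`. -/
def hfoldSumset (A : Set ℕ) (h : ℕ) : Set ℕ :=
  {n | ∃ f : Fin h → ℕ, (∀ i, f i ∈ A ∪ {0}) ∧ ∑ i, f i = n}

/-- Auxiliary sumset (with 0 adjoined to both sets). -/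
def mySumset (X Y : Set ℕ) : Set ℕ :=
  {n | ∃ x ∈ X ∪ ({0} : Set ℕ), ∃ y ∈ Y ∪ ({0} : Set ℕ), x + y = n}

lemma zero_mem_hfold (A : Set ℕ) (h : ℕ) : 0 ∈ hfoldSumset A h :=
  ⟨fun _ => 0, fun _ => Or.inr rfl, by simp⟩

lemma hfold_succ (A : Set ℕ) (h : ℕ) :
    hfoldSumset A (h + 1) = mySumset (hfoldSumset A h) A := by
  ext n
  constructor
  · rintro ⟨f, hf, rfl⟩
    refine ⟨∑ i : Fin h, f i.castSucc,
      Or.inl ⟨fun i => f i.castSucc, fun i => hf _, rfl⟩, f (Fin.last h), hf _, ?_⟩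
    rw [Fin.sum_univ_castSucc]
  · rintro ⟨x, hx, y, hy, rfl⟩
    have hx' : x ∈ hfoldSumset A h := by
      rcases hx with hx | hx
      · exact hx
      · simp only [Set.mem_singleton_iff] at hx
        subst hx
        exact zero_mem_hfold A h
    obtain ⟨f, hf, hsum⟩ := hx'
    refine ⟨Fin.snoc f y, ?_, ?_⟩
    · intro i
      refine Fin.lastCases ?_ ?_ i
      · simpa using hy
      · intro j; simpa using hf j
    · rw [Fin.sum_univ_castSucc]
      simp [Fin.snoc_castSucc, hsum]

lemma hfold_zero (A : Set ℕ) : hfoldSumset A 0 = {0} := by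
  ext n
  constructor
  · rintro ⟨f, _, rfl⟩; simp
  · rintro rfl; exact zero_mem_hfold A 0

open Finset in
lemma cnt_eq (X : Set ℕ) (n : ℕ) :
    (X ∩ Set.Icc 1 n).ncard = ((Finset.Icc 1 n).filter (fun x => x ∈ X)).card := by
  rw [← Set.ncard_coe_finset]
  congr 1
  ext x
  simp only [Finset.coe_filter, Finset.mem_Icc, Set.mem_inter_iff, Set.mem_Icc, Set.mem_setOf_eq]
  tauto

open Finset in
/-- The key counting lemma of Shnirel'man's argument. -/
lemma key_lemma (A' B : Set ℕ) (β : ℝ) (hβ1 : β ≤ 1)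
    (hB : ∀ m : ℕ, 1 ≤ m → β * m ≤ (((Finset.Icc 1 m).filter (fun x => x ∈ B)).card : ℝ))
    (n : ℕ) :
    (n : ℝ) - (((Finset.Icc 1 n).filter (fun x => x ∈ mySumset A' B)).card : ℝ) ≤
      (1 - β) * ((n : ℝ) - (((Finset.Icc 1 n).filter (fun x => x ∈ A')).card : ℝ)) := by
  set C := mySumset A' B with hC
  set AF := (Finset.Icc 1 n).filter (fun x => x ∈ A') with hAF
  set D := (Finset.Icc 1 n).filter (fun x => x ∉ C) with hD
  have hAC : ∀ a ∈ A', a ∈ C := fun a ha => ⟨a, Or.inl ha, 0, Or.inr rfl, add_zero a⟩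
  set P : Finset ℕ := insert 0 AF with hP
  have h0P : 0 ∈ P := mem_insert_self _ _
  have hPle : ∀ a ∈ P, a ≤ n := by
    intro a ha
    rcases mem_insert.1 ha with rfl | ha
    · exact Nat.zero_le _
    · exact (mem_Icc.1 (mem_filter.1 ha).1).2
  have hPA : ∀ a ∈ P, a ∈ A' ∪ ({0} : Set ℕ) := by
    intro a ha
    rcases mem_insert.1 ha with rfl | ha
    · exact Or.inr rfl
    · exact Or.inl (mem_filter.1 ha).2
  have hPmem : ∀ a, 1 ≤ a → a ≤ n → a ∈ A' → a ∈ P := by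
    intro a h1 h2 h3
    exact mem_insert_of_mem (mem_filter.2 ⟨mem_Icc.2 ⟨h1, h2⟩, h3⟩)
  have hne : ∀ x : ℕ, (P.filter (fun z => z ≤ x)).Nonempty :=
    fun x => ⟨0, mem_filter.2 ⟨h0P, Nat.zero_le x⟩⟩
  set p : ℕ → ℕ := fun x => (P.filter (fun z => z ≤ x)).max' (hne x) with hp
  have hpP : ∀ x, p x ∈ P ∧ p x ≤ x := by
    intro x
    have h1 := max'_mem (P.filter (fun z => z ≤ x)) (hne x)
    rw [mem_filter] at h1
    exact h1
  have hple : ∀ x, ∀ y ∈ P, y ≤ x → y ≤ p x := by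
    intro x y hy hyx
    exact le_max' (P.filter (fun z => z ≤ x)) y (mem_filter.2 ⟨hy, hyx⟩)
  have hDmem : ∀ x ∈ D, (1 ≤ x ∧ x ≤ n) ∧ x ∉ C := by
    intro x hx
    have h1 := mem_filter.1 hx
    exact ⟨mem_Icc.1 h1.1, h1.2⟩
  have hDnotP : ∀ x ∈ D, x ∉ P := by
    intro x hx hxP
    obtain ⟨⟨h1, _⟩, hxC⟩ := hDmem x hx
    rcases mem_insert.1 hxP with rfl | hxA
    · omega
    · exact hxC (hAC x (mem_filter.1 hxA).2)
  have hplt : ∀ x ∈ D, p x < x := by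
    intro x hx
    refine lt_of_le_of_ne (hpP x).2 fun hxe => ?_
    exact hDnotP x hx (hxe ▸ (hpP x).1)
  -- fibers of p over P
  have hcard : D.card = ∑ a ∈ P, (D.filter fun x => p x = a).card :=
    card_eq_sum_card_fiberwise (fun x _ => (hpP x).1)
  set M : ℕ → ℕ := fun a =>
    if h : (D.filter fun x => p x = a).Nonempty then (D.filter fun x => p x = a).max' h else a
    with hM
  have hMD : ∀ a, ∀ hDa : (D.filter fun x => p x = a).Nonempty,
      M a ∈ D ∧ p (M a) = a := by
    intro a hDa
    have hMa : M a = (D.filter fun x => p x = a).max' hDa := by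
      rw [hM]; exact dif_pos hDa
    have hmem := max'_mem _ hDa
    rw [← hMa, mem_filter] at hmem
    exact hmem
  have hMeq : ∀ a, ¬(D.filter fun x => p x = a).Nonempty → M a = a := by
    intro a hDa
    rw [hM]; exact dif_neg hDa
  have haM : ∀ a, a ≤ M a := by
    intro a
    by_cases h : (D.filter fun x => p x = a).Nonempty
    · obtain ⟨hmD, hpm⟩ := hMD a h
      have h2 := (hpP (M a)).2
      rw [hpm] at h2; exact h2
    · rw [hMeq a h]
  have hMlt : ∀ a, (D.filter fun x => p x = a).Nonempty → a < M a := by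
    intro a h
    obtain ⟨hmD, hpm⟩ := hMD a h
    have := hplt _ hmD
    omega
  have hMle : ∀ a, ∀ y ∈ P, y ≤ M a → y ≤ a := by
    intro a y hy hyM
    by_cases h : (D.filter fun x => p x = a).Nonempty
    · obtain ⟨hmD, hpm⟩ := hMD a h
      have := hple (M a) y hy hyM
      rw [hpm] at this; exact this
    · rw [hMeq a h] at hyM; exact hyM
  have hMn : ∀ a ∈ P, M a ≤ n := by
    intro a ha
    by_cases h : (D.filter fun x => p x = a).Nonempty
    · exact ((hDmem _ (hMD a h).1).1).2
    · rw [hMeq a h]; exact hPle a ha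
  -- intervals Ioc a (M a) are disjoint and avoid A'
  have hIsub : ∀ a ∈ P, Finset.Ioc a (M a) ⊆ (Finset.Icc 1 n).filter (fun x => x ∉ A') := by
    intro a ha y hy
    obtain ⟨hay, hyM⟩ := mem_Ioc.1 hy
    have hyn : y ≤ n := le_trans hyM (hMn a ha)
    refine mem_filter.2 ⟨mem_Icc.2 ⟨by omega, hyn⟩, fun hyA => ?_⟩
    have hyP : y ∈ P := hPmem y (by omega) hyn hyA
    have := hMle a y hyP hyM
    omega
  have hIdisj : ∀ a ∈ P, ∀ b ∈ P, a ≠ b →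
      Disjoint (Finset.Ioc a (M a)) (Finset.Ioc b (M b)) := by
    intro a _ b hb hab
    rw [Finset.disjoint_left]
    intro y hya hyb
    obtain ⟨hay, hyMa⟩ := mem_Ioc.1 hya
    obtain ⟨hby, hyMb⟩ := mem_Ioc.1 hyb
    rcases Nat.lt_or_ge a b with hlt | hge
    · have : b ≤ a := hMle a b hb (by omega)
      omega
    · have hlt : b < a := by omega
      have : a ≤ b := hMle b a ‹a ∈ P› (by omega)
      omega
  have hAFn : AF.card ≤ n := by
    have h1 := card_filter_le (Finset.Icc 1 n) (fun x => x ∈ A')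
    rw [Nat.card_Icc, Nat.add_sub_cancel] at h1
    exact h1
  have hsumI : ∑ a ∈ P, (M a - a) ≤ n - AF.card := by
    have h1 : ∑ a ∈ P, (M a - a) = (P.biUnion fun a => Finset.Ioc a (M a)).card := by
      rw [card_biUnion hIdisj]
      exact Finset.sum_congr rfl fun a _ => (Nat.card_Ioc a (M a)).symm
    have h2 : (P.biUnion fun a => Finset.Ioc a (M a)) ⊆
        (Finset.Icc 1 n).filter (fun x => x ∉ A') := by
      intro y hy
      obtain ⟨a, ha, hya⟩ := mem_biUnion.1 hy
      exact hIsub a ha hya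
    have h3 : ((Finset.Icc 1 n).filter (fun x => x ∉ A')).card
        + ((Finset.Icc 1 n).filter (fun x => x ∈ A')).card = n := by
      have h4 := card_filter_add_card_filter_not (s := Finset.Icc 1 n)
        (p := fun x => x ∈ A')
      rw [Nat.card_Icc, Nat.add_sub_cancel] at h4
      omega
    have h5 := card_le_card h2
    rw [h1, hAF]
    omega
  -- fiber cardinality bound
  have hfiber : ∀ a ∈ P, ((D.filter fun x => p x = a).card : ℝ) ≤
      (1 - β) * ((M a - a : ℕ) : ℝ) := by
    intro a ha
    by_cases h : (D.filter fun x => p x = a).Nonempty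
    · have hg1 : 1 ≤ M a - a := by have := hMlt a h; omega
      -- injection x ↦ x - a into (Icc 1 (M a - a)).filter (∉ B)
      have hinj : (D.filter fun x => p x = a).card ≤
          ((Finset.Icc 1 (M a - a)).filter (fun y => y ∉ B)).card := by
        refine card_le_card_of_injOn (fun x => x - a) ?_ ?_
        · intro x hx
          obtain ⟨hxD, hpx⟩ := mem_filter.1 hx
          have hax : a < x := by have := hplt x hxD; omega
          have hxM : x ≤ M a := by
            have hMa : M a = (D.filter fun z => p z = a).max' h := by
              rw [hM]; exact dif_pos h
            rw [hMa]; exact le_max' _ x hx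
          obtain ⟨⟨hx1, hxn⟩, hxC⟩ := hDmem x hxD
          refine mem_filter.2 ⟨mem_Icc.2 ⟨?_, ?_⟩, fun hbB => ?_⟩
          · show 1 ≤ x - a; omega
          · show x - a ≤ M a - a; omega
          · exact hxC ⟨a, hPA a ha, x - a, Or.inl hbB, by omega⟩
        · intro x hx y hy hxy
          obtain ⟨hxD, hpx⟩ := mem_filter.1 hx
          obtain ⟨hyD, hpy⟩ := mem_filter.1 hy
          have hax : a < x := by have := hplt x hxD; omega
          have hay : a < y := by have := hplt y hyD; omega
          have : x - a = y - a := hxy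
          omega
      have hBg : β * (M a - a : ℕ) ≤
          (((Finset.Icc 1 (M a - a)).filter (fun y => y ∈ B)).card : ℝ) := hB _ hg1
      have hle : ((Finset.Icc 1 (M a - a)).filter (fun y => y ∈ B)).card ≤ M a - a := by
        have h1 := card_filter_le (Finset.Icc 1 (M a - a)) (fun y => y ∈ B)
        rwa [Nat.card_Icc, Nat.add_sub_cancel] at h1
      have hcardg : ((Finset.Icc 1 (M a - a)).filter (fun y => y ∉ B)).card + 
          ((Finset.Icc 1 (M a - a)).filter (fun y => y ∈ B)).card = M a - a := by
        have h4 := card_filter_add_card_filter_not (s := Finset.Icc 1 (M a - a))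
          (p := fun y => y ∈ B)
        rw [Nat.card_Icc, Nat.add_sub_cancel] at h4
        omega
      have hstep : ((D.filter fun x => p x = a).card : ℝ) ≤
          ((M a - a : ℕ) : ℝ) - (((Finset.Icc 1 (M a - a)).filter (fun y => y ∈ B)).card : ℝ) := by
        have h6 : (D.filter fun x => p x = a).card ≤
            (M a - a) - ((Finset.Icc 1 (M a - a)).filter (fun y => y ∈ B)).card := by omega
        have h7 := (Nat.cast_le (α := ℝ)).2 h6
        rwa [Nat.cast_sub hle] at h7
      nlinarith [hstep, hBg]
    · rw [not_nonempty_iff_eq_empty] at h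
      rw [h, hMeq a (by simp [h])]
      simp
  -- put it together
  have hCD : ((Finset.Icc 1 n).filter (fun x => x ∈ C)).card + D.card = n := by
    have h4 := card_filter_add_card_filter_not (s := Finset.Icc 1 n)
      (p := fun x => x ∈ C)
    rw [Nat.card_Icc, Nat.add_sub_cancel] at h4
    rw [hD]
    omega
  have hchain : (D.card : ℝ) ≤ (1 - β) * ((n : ℝ) - (AF.card : ℝ)) := by
    calc (D.card : ℝ) = ∑ a ∈ P, ((D.filter fun x => p x = a).card : ℝ) := by
          rw [hcard]; push_cast; ring
      _ ≤ ∑ a ∈ P, (1 - β) * ((M a - a : ℕ) : ℝ) := Finset.sum_le_sum hfiber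
      _ = (1 - β) * ((∑ a ∈ P, (M a - a) : ℕ) : ℝ) := by
          rw [← Finset.mul_sum]; push_cast; ring
      _ ≤ (1 - β) * ((n : ℝ) - (AF.card : ℝ)) := by
          have h1 : ((∑ a ∈ P, (M a - a) : ℕ) : ℝ) ≤ (n : ℝ) - (AF.card : ℝ) := by
            have h2 := (Nat.cast_le (α := ℝ)).2 hsumI
            rwa [Nat.cast_sub hAFn] at h2
          have h2 : (0 : ℝ) ≤ 1 - β := by linarith
          nlinarith
  have hCDr : (((Finset.Icc 1 n).filter (fun x => x ∈ C)).card : ℝ) + (D.card : ℝ) = n := by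
    exact_mod_cast hCD
  linarith [hchain, hCDr]

/-- If `σ(A) = α` and `h ≥ 1`, then `σ(hA) ≥ 1 - (1 - α)^h`. -/
theorem density_hfoldSumset_ge
    (A : Set ℕ) (hA : A ⊆ {n | 0 < n}) (α : ℝ) (hα : shnirelmanDensity A = α)
    (h : ℕ) (hh : 1 ≤ h) :
    shnirelmanDensity (hfoldSumset A h) ≥ 1 - (1 - α) ^ h := by
  -- basic facts about α
  set S := {r : ℝ | ∃ n : ℕ, 0 < n ∧ r = ((A ∩ Set.Icc 1 n).ncard : ℝ) / (n : ℝ)} with hS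
  have hSbdd : BddBelow S := by
    refine ⟨0, fun r hr => ?_⟩
    obtain ⟨n, hn, rfl⟩ := hr
    positivity
  have hαle : ∀ m : ℕ, 0 < m → α ≤ ((A ∩ Set.Icc 1 m).ncard : ℝ) / m := by
    intro m hm
    rw [← hα]
    exact csInf_le hSbdd ⟨m, hm, rfl⟩
  have hα1 : α ≤ 1 := by
    have h1 := hαle 1 one_pos
    have hcard : (A ∩ Set.Icc 1 1).ncard ≤ 1 := by
      have hsub : A ∩ Set.Icc 1 1 ⊆ {1} := by
        intro x hx
        have h2 := hx.2
        simp only [Set.mem_Icc] at h2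
        simp only [Set.mem_singleton_iff]
        omega
      calc (A ∩ Set.Icc 1 1).ncard ≤ ({1} : Set ℕ).ncard :=
            Set.ncard_le_ncard hsub (Set.finite_singleton 1)
        _ = 1 := Set.ncard_singleton 1
    have h3 : α ≤ ((A ∩ Set.Icc 1 1).ncard : ℝ) := by simpa using h1
    calc α ≤ ((A ∩ Set.Icc 1 1).ncard : ℝ) := h3
      _ ≤ 1 := by exact_mod_cast hcard
  have hBbound : ∀ m : ℕ, 1 ≤ m →
      α * m ≤ (((Finset.Icc 1 m).filter (fun x => x ∈ A)).card : ℝ) := by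
    intro m hm
    have h1 := hαle m (by omega)
    rw [cnt_eq] at h1
    have h2 := (le_div_iff₀ (by positivity : (0:ℝ) < (m:ℝ))).1 h1
    linarith
  -- main induction
  have hmain : ∀ k : ℕ, ∀ n : ℕ,
      (n : ℝ) - (((Finset.Icc 1 n).filter (fun x => x ∈ hfoldSumset A k)).card : ℝ) ≤
        (1 - α) ^ k * n := by
    intro k
    induction k with
    | zero =>
      intro n
      have hemp : ((Finset.Icc 1 n).filter (fun x => x ∈ hfoldSumset A 0)) = ∅ := by
        rw [hfold_zero]
        ext x
        simp only [Finset.mem_filter, Finset.mem_Icc, Set.mem_singleton_iff,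
          Finset.notMem_empty, iff_false]
        omega
      rw [hemp]
      simp
    | succ k ih =>
      intro n
      have hkey := key_lemma (hfoldSumset A k) A α hα1 hBbound n
      rw [← hfold_succ] at hkey
      have h2 : (0 : ℝ) ≤ 1 - α := by linarith
      calc (n : ℝ) - (((Finset.Icc 1 n).filter (fun x => x ∈ hfoldSumset A (k+1))).card : ℝ)
          ≤ (1 - α) * ((n : ℝ) -
            (((Finset.Icc 1 n).filter (fun x => x ∈ hfoldSumset A k)).card : ℝ)) := hkey
        _ ≤ (1 - α) * ((1 - α) ^ k * n) := mul_le_mul_of_nonneg_left (ih n) h2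
        _ = (1 - α) ^ (k + 1) * n := by ring
  -- conclude
  rw [shnirelmanDensity, ge_iff_le]
  refine le_csInf ⟨((hfoldSumset A h ∩ Set.Icc 1 1).ncard : ℝ) / 1, 1, one_pos, by norm_num⟩ ?_
  rintro r ⟨n, hn, rfl⟩
  rw [cnt_eq, le_div_iff₀ (by positivity : (0:ℝ) < (n:ℝ))]
  have hm := hmain h n
  nlinarith [hm]
end

section
/- (Shnirel'man's basis theorem) Let A be a set of positive integers with Shnirel'man density σ(A) > 0. Then A is a basis for the nonnegative integers, i.e., there exists an integer h ≥ 1 such that hA = ℕ₀. -/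
/-!
Shnirel'man's inequality `1 - σ(A + B) ≤ (1 - σ(A)) (1 - σ(B))` for sets containing `0` iterates to
`1 - σ(h • S) ≤ (1 - σ(S)) ^ h`. For `S = A ∪ {0}`, which has the density of `A`, some `h • S`
therefore has density at least `1/2`, and by pigeonhole a set `T ∋ 0` of density at least `1/2`
satisfies `T + T = ℕ`.
-/

open Finset
open scoped Classical Pointwise

theorem shnirelmanDensity_eq_schnirelmannDensity (A : Set ℕ) :
    shnirelmanDensity A = schnirelmannDensity A := by
  have hcount (n : ℕ) : (A ∩ Set.Icc 1 n).ncard = #{a ∈ Ioc 0 n | a ∈ A} := by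
    rw [← Set.ncard_coe_finset, coe_filter]
    congr 1
    ext a
    simp only [Set.mem_inter_iff, Set.mem_Icc, mem_Ioc, Set.mem_ofPred_eq]
    exact and_comm
  rw [shnirelmanDensity, schnirelmannDensity, iInf, Set.range]
  congr 1
  ext r
  simp only [Subtype.exists, exists_prop, Set.mem_ofPred_eq, hcount, eq_comm]

theorem hfoldSumset_eq_nsmul (A : Set ℕ) (h : ℕ) : hfoldSumset A h = h • insert 0 A := by
  ext n
  have hsum : ∑ _ : Fin h, insert 0 A = h • insert 0 A := by simp
  rw [← hsum, Set.mem_finsetSum, hfoldSumset, Set.union_singleton]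
  simp

theorem card_filter_Ioc_add_card_filter_Ioc {a b c : ℕ} (hab : a ≤ b) (hbc : b ≤ c) (p : ℕ → Prop)
    [DecidablePred p] : #{x ∈ Ioc a b | p x} + #{x ∈ Ioc b c | p x} = #{x ∈ Ioc a c | p x} := by
  rw [← card_union_of_disjoint (disjoint_filter_filter (Ioc_disjoint_Ioc_of_le le_rfl)),
    ← filter_union, Ioc_union_Ioc_eq_Ioc hab hbc]

theorem card_filter_Ioc_add_le {A B : Set ℕ} {a n : ℕ} (ha : a + 1 ∈ A) (hB : 0 ∈ B)
    (han : a < n) :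
    #{x ∈ Ioc 0 (n - (a + 1)) | x ∈ B} + 1 ≤ #{x ∈ Ioc a n | x ∈ A + B} := by
  have hsub : insert (a + 1) ({x ∈ Ioc 0 (n - (a + 1)) | x ∈ B}.image (a + 1 + ·)) ⊆
      {x ∈ Ioc a n | x ∈ A + B} := by
    intro x hx
    simp only [mem_insert, mem_image, mem_filter, mem_Ioc] at hx ⊢
    rcases hx with rfl | ⟨b, ⟨⟨hb, hbn⟩, hbB⟩, rfl⟩
    · exact ⟨⟨by omega, han⟩, by simpa using Set.add_mem_add ha hB⟩
    · exact ⟨⟨by omega, by omega⟩, Set.add_mem_add ha hbB⟩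
  have hnotMem : a + 1 ∉ {x ∈ Ioc 0 (n - (a + 1)) | x ∈ B}.image (a + 1 + ·) := by
    simp only [mem_image, mem_filter, mem_Ioc]
    omega
  calc #{x ∈ Ioc 0 (n - (a + 1)) | x ∈ B} + 1
      = #(insert (a + 1) ({x ∈ Ioc 0 (n - (a + 1)) | x ∈ B}.image (a + 1 + ·))) := by
        rw [card_insert_of_notMem hnotMem, card_image_of_injective _ (add_right_injective _)]
    _ ≤ _ := card_le_card hsub

/-- If `a` is the largest element of `A` in `[1, n]`, then `(a, n]` contains no element of `A`,
while `A + B` meets `[a, n]` in at least `1 + B(n - a)` points (`a` and `a + B`); induction applies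
to the part below `a`. -/
theorem card_filter_add_mul_le {A B : Set ℕ} (hA : 0 ∈ A) (hB : 0 ∈ B) (n : ℕ) :
    #{x ∈ Ioc 0 n | x ∈ A} + schnirelmannDensity B * (n - #{x ∈ Ioc 0 n | x ∈ A}) ≤
      #{x ∈ Ioc 0 n | x ∈ A + B} := by
  induction n using Nat.strong_induction_on with
  | _ n ih =>
  by_cases hempty : {x ∈ Ioc 0 n | x ∈ A} = ∅
  · have hBC : #{x ∈ Ioc 0 n | x ∈ B} ≤ #{x ∈ Ioc 0 n | x ∈ A + B} :=
      card_le_card (monotone_filter_right _ fun x _ hx => by simpa using Set.add_mem_add hA hx)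
    rw [hempty, card_empty, Nat.cast_zero, zero_add, sub_zero]
    exact (schnirelmannDensity_mul_le_card_filter).trans (by exact_mod_cast hBC)
  obtain ⟨a, haA, hmax⟩ := exists_max_image _ id (nonempty_iff_ne_empty.2 hempty)
  simp only [mem_filter, mem_Ioc, id, and_imp] at haA hmax
  obtain ⟨⟨ha0, han⟩, haA⟩ := haA
  obtain ⟨m, rfl⟩ : ∃ m, a = m + 1 := ⟨a - 1, by omega⟩
  have hmn : m < n := han
  have hA_top : #{x ∈ Ioc m n | x ∈ A} = 1 := by
    rw [card_eq_one]
    refine ⟨m + 1, eq_singleton_iff_unique_mem.2 ⟨by simp [han, haA], fun x hx => ?_⟩⟩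
    simp only [mem_filter, mem_Ioc] at hx
    have hx_le := hmax x (by omega) hx.1.2 hx.2
    omega
  have hC_top : (#{x ∈ Ioc 0 (n - (m + 1)) | x ∈ B} : ℝ) + 1 ≤ #{x ∈ Ioc m n | x ∈ A + B} := by
    exact_mod_cast card_filter_Ioc_add_le haA hB hmn
  have hB_bound := schnirelmannDensity_mul_le_card_filter (A := B) (n := n - (m + 1))
  have hA_low := ih m hmn
  rw [Nat.cast_sub han, Nat.cast_add_one] at hB_bound
  rw [← card_filter_Ioc_add_card_filter_Ioc (Nat.zero_le m) hmn.le (· ∈ A),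
    ← card_filter_Ioc_add_card_filter_Ioc (Nat.zero_le m) hmn.le (· ∈ A + B), hA_top]
  push_cast
  linarith

theorem one_sub_schnirelmannDensity_add_le {A B : Set ℕ} (hA : 0 ∈ A) (hB : 0 ∈ B) :
    1 - schnirelmannDensity (A + B) ≤
      (1 - schnirelmannDensity A) * (1 - schnirelmannDensity B) := by
  suffices schnirelmannDensity A + schnirelmannDensity B -
      schnirelmannDensity A * schnirelmannDensity B ≤ schnirelmannDensity (A + B) by linarith
  rw [le_schnirelmannDensity_iff]
  intro n hn
  rw [le_div_iff₀ (by positivity)]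
  have hA_count := schnirelmannDensity_mul_le_card_filter (A := A) (n := n)
  have hB_le_one := schnirelmannDensity_le_one (A := B)
  nlinarith [card_filter_add_mul_le hA hB n]

theorem one_sub_schnirelmannDensity_nsmul_le {A : Set ℕ} (hA : 0 ∈ A) (h : ℕ) :
    1 - schnirelmannDensity (h • A) ≤ (1 - schnirelmannDensity A) ^ h := by
  induction h with
  | zero => simp [schnirelmannDensity_nonneg]
  | succ h ih =>
    rw [succ_nsmul, pow_succ]
    calc 1 - schnirelmannDensity (h • A + A)
        ≤ (1 - schnirelmannDensity (h • A)) * (1 - schnirelmannDensity A) :=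
          one_sub_schnirelmannDensity_add_le (Set.zero_mem_nsmul hA) hA
      _ ≤ (1 - schnirelmannDensity A) ^ h * (1 - schnirelmannDensity A) :=
          mul_le_mul_of_nonneg_right ih (sub_nonneg.2 schnirelmannDensity_le_one)

theorem exists_nsmul_eq_univ_of_schnirelmannDensity_pos {A : Set ℕ} (hA : 0 ∈ A)
    (hpos : 0 < schnirelmannDensity A) : ∃ h : ℕ, 1 ≤ h ∧ h • A = Set.univ := by
  obtain ⟨h, hh⟩ := exists_pow_lt_of_lt_one (by norm_num : (0 : ℝ) < 1 / 2)
    (by linarith : 1 - schnirelmannDensity A < 1)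
  have hh0 : h ≠ 0 := by
    rintro rfl
    norm_num at hh
  have hhalf := one_sub_schnirelmannDensity_nsmul_le hA h
  refine ⟨h + h, by omega, ?_⟩
  rw [add_nsmul]
  exact add_eq_univ_of_one_le_schirelmannDensity_add_schnirelmannDensity
    (Set.zero_mem_nsmul hA) (Set.zero_mem_nsmul hA) (by linarith)

theorem shnirelman_basis_theorem_general
    (A : Set ℕ) (hpos : 0 < shnirelmanDensity A) :
    ∃ h : ℕ, 1 ≤ h ∧ hfoldSumset A h = Set.univ := by
  rw [shnirelmanDensity_eq_schnirelmannDensity] at hpos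
  simpa only [hfoldSumset_eq_nsmul] using
    exists_nsmul_eq_univ_of_schnirelmannDensity_pos (Set.mem_insert 0 A) (by simpa using hpos)

/-- Shnirel'man's basis theorem: if `σ(A) > 0` then `A` is a basis for the
nonnegative integers, i.e., `hA = ℕ₀` for some `h ≥ 1`. -/
theorem shnirelman_basis_theorem
    (A : Set ℕ) (hA : A ⊆ {n | 0 < n}) (hpos : 0 < shnirelmanDensity A) :
    ∃ h : ℕ, 1 ≤ h ∧ hfoldSumset A h = Set.univ :=
  shnirelman_basis_theorem_general A hpos
end

section
/- Let G be a partially ordered group with identity e and positive cone G⁺ = {x ∈ G : x > e}. Let 𝒥 be a set of nonempty finite subsets of G⁺ and let σ_𝒥 be the associated density. Let A and B be subsets of G⁺ with σ_𝒥(A) + σ_𝒥(B) > 1. If x ∈ G⁺ and the open interval (e, x) belongs to 𝒥, then there exist a ∈ A and b ∈ B with ab = x. -/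
/-!
Put `J = (e, x)`. The map `b ↦ x b⁻¹` is an injection of `J` into itself, so `A ∩ J` and
`x (B ∩ J)⁻¹` are subsets of `J` whose sizes add up to more than `|J|`, as
`|A ∩ J| / |J| + |B ∩ J| / |J| ≥ σ_𝒥(A) + σ_𝒥(B) > 1`. They therefore meet, in some
`a = x b⁻¹` with `a ∈ A`, `b ∈ B`.
-/

/-- The density `σ_𝒥(A) = inf { |A ∩ J| / |J| : J ∈ 𝒥 }` determined by a
collection `𝒥` of subsets of `X`. -/
noncomputable def densJ {X : Type*} (𝒥 : Set (Set X)) (A : Set X) : ℝ :=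
  sInf ((fun J => ((A ∩ J).ncard : ℝ) / (J.ncard : ℝ)) '' 𝒥)

theorem densJ_le_of_mem {X : Type*} {𝒥 : Set (Set X)} {J : Set X} (hJ : J ∈ 𝒥) (A : Set X) :
    densJ 𝒥 A ≤ ((A ∩ J).ncard : ℝ) / J.ncard :=
  csInf_le ⟨0, by rintro _ ⟨J', -, rfl⟩; positivity⟩ ⟨J, hJ, rfl⟩

namespace Set

variable {α : Type*} {s t u : Set α}

theorem inter_nonempty_of_ncard_lt_ncard_add_ncard (hts : t ⊆ s) (hus : u ⊆ s) (hs : s.Finite)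
    (h : s.ncard < t.ncard + u.ncard) : (t ∩ u).Nonempty := by
  rw [nonempty_iff_ne_empty]
  intro htu
  have hunion := ncard_union_add_ncard_inter t u (hs.subset hts) (hs.subset hus)
  have hle := ncard_le_ncard (union_subset hts hus) hs
  rw [htu, ncard_empty] at hunion
  omega

/-- If `s` is infinite, `s.ncard = 0` and both quotients are `0`, so the hypothesis also
forces `s` to be finite. -/
theorem inter_nonempty_of_one_lt_ncard_div_add_ncard_div (hts : t ⊆ s) (hus : u ⊆ s)
    (h : (1 : ℝ) < t.ncard / s.ncard + u.ncard / s.ncard) : (t ∩ u).Nonempty := by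
  have hs : s.Finite := finite_of_ncard_ne_zero fun h0 => by norm_num [h0] at h
  refine inter_nonempty_of_ncard_lt_ncard_add_ncard hts hus hs ?_
  by_contra! hle
  rw [← add_div] at h
  exact h.not_ge (div_le_one_of_le₀ (by exact_mod_cast hle) (Nat.cast_nonneg _))

theorem mapsTo_mul_inv_Ioo_one {G : Type*} [Group G] [PartialOrder G]
    [CovariantClass G G (· * ·) (· ≤ ·)] [CovariantClass G G (Function.swap (· * ·)) (· ≤ ·)]
    (x : G) : MapsTo (fun b => x * b⁻¹) (Ioo 1 x) (Ioo 1 x) := by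
  rintro b ⟨hb1, hbx⟩
  exact ⟨lt_mul_inv_iff_lt.mpr hbx, mul_lt_of_lt_one_right' x (inv_lt_one'.mpr hb1)⟩

end Set

theorem exists_mul_eq_of_one_lt_add_densJ_general
    {G : Type*} [Group G] [PartialOrder G]
    [CovariantClass G G (· * ·) (· ≤ ·)]
    [CovariantClass G G (Function.swap (· * ·)) (· ≤ ·)]
    (𝒥 : Set (Set G))
    (A B : Set G)
    (hd : 1 < densJ 𝒥 A + densJ 𝒥 B)
    (x : G) (hIoo : Set.Ioo (1 : G) x ∈ 𝒥) :
    ∃ a ∈ A, ∃ b ∈ B, a * b = x := by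
  set J := Set.Ioo (1 : G) x
  have hinj : Function.Injective fun b : G => x * b⁻¹ := fun b c h => by simpa using h
  have hreflect : (fun b => x * b⁻¹) '' (B ∩ J) ⊆ J :=
    (Set.mapsTo_mul_inv_Ioo_one x).mono_left Set.inter_subset_right |>.image_subset
  have hratio : (1 : ℝ) < ((A ∩ J).ncard : ℝ) / J.ncard
      + (((fun b => x * b⁻¹) '' (B ∩ J)).ncard : ℝ) / J.ncard := by
    rw [Set.ncard_image_of_injective _ hinj]
    linarith [densJ_le_of_mem hIoo A, densJ_le_of_mem hIoo B]
  obtain ⟨_, ⟨haA, -⟩, b, ⟨hbB, -⟩, rfl⟩ :=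
    Set.inter_nonempty_of_one_lt_ncard_div_add_ncard_div Set.inter_subset_right hreflect hratio
  exact ⟨x * b⁻¹, haA, b, hbB, inv_mul_cancel_right x b⟩

/-- In a partially ordered group `G` with positive cone `G⁺ = {x : 1 < x}`,
if `A, B ⊆ G⁺` satisfy `σ_𝒥(A) + σ_𝒥(B) > 1`, and `x ∈ G⁺` has
`(e, x) ∈ 𝒥`, then `x = ab` for some `a ∈ A`, `b ∈ B`. -/
theorem exists_mul_eq_of_one_lt_add_densJ
    {G : Type*} [Group G] [PartialOrder G]
    [CovariantClass G G (· * ·) (· ≤ ·)]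
    [CovariantClass G G (Function.swap (· * ·)) (· ≤ ·)]
    (𝒥 : Set (Set G))
    (h𝒥 : ∀ J ∈ 𝒥, J.Nonempty ∧ J.Finite ∧ J ⊆ Set.Ioi (1 : G))
    (A B : Set G) (hA : A ⊆ Set.Ioi 1) (hB : B ⊆ Set.Ioi 1)
    (hd : 1 < densJ 𝒥 A + densJ 𝒥 B)
    (x : G) (hx : x ∈ Set.Ioi (1 : G)) (hIoo : Set.Ioo (1 : G) x ∈ 𝒥) :
    ∃ a ∈ A, ∃ b ∈ B, a * b = x :=
  exists_mul_eq_of_one_lt_add_densJ_general 𝒥 A B hd x hIoo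
end

section
/- Let G be a partially ordered group with identity e and positive cone G⁺ = {x ∈ G : x > e}, and let H⁺ be the set of all atoms of G⁺. Let 𝒥 be a set of nonempty finite subsets of G⁺ such that the open interval (e, x) belongs to 𝒥 for every x ∈ G⁺ \ H⁺. Let A and B be subsets of G⁺ with H⁺ ⊆ A ∪ B. If σ_𝒥(A) + σ_𝒥(B) > 1, then AB = G⁺ ∪ {e}. -/
/-- The product set `AB = {ab : a ∈ A ∪ {e}, b ∈ B ∪ {e}}`. -/
def prodset {G : Type*} [Group G] (A B : Set G) : Set G :=
  {g | ∃ a ∈ A ∪ {1}, ∃ b ∈ B ∪ {1}, a * b = g}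

open Set

theorem Set.inter_nonempty_of_ncard_lt_ncard_add_ncard_s8 {α : Type*} {s t u : Set α}
    (hsu : s ⊆ u) (htu : t ⊆ u) (hu : u.Finite) (h : u.ncard < s.ncard + t.ncard) :
    (s ∩ t).Nonempty := by
  have hunion : (s ∪ t).ncard ≤ u.ncard := ncard_le_ncard (union_subset hsu htu) hu
  have hsum := ncard_union_add_ncard_inter s t (hu.subset hsu) (hu.subset htu)
  exact (ncard_pos (hu.subset (inter_subset_left.trans hsu))).mp (by omega)

section Density

variable {X : Type*} {𝒥 : Set (Set X)} {J : Set X}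

theorem densJ_le (hJ : J ∈ 𝒥) (A : Set X) :
    densJ 𝒥 A ≤ ((A ∩ J).ncard : ℝ) / (J.ncard : ℝ) :=
  csInf_le ⟨0, by rintro _ ⟨K, -, rfl⟩; positivity⟩ ⟨J, hJ, rfl⟩

theorem ncard_lt_ncard_inter_add_ncard_inter_of_one_lt_add_densJ {A B : Set X} (hJ : J ∈ 𝒥)
    (hne : J.Nonempty) (hfin : J.Finite) (hd : 1 < densJ 𝒥 A + densJ 𝒥 B) :
    J.ncard < (A ∩ J).ncard + (B ∩ J).ncard := by
  have hpos : (0 : ℝ) < J.ncard := by exact_mod_cast (ncard_pos hfin).mpr hne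
  have h : (1 : ℝ) < (((A ∩ J).ncard + (B ∩ J).ncard : ℕ) : ℝ) / J.ncard := by
    push_cast
    rw [add_div]
    linarith [densJ_le hJ A, densJ_le hJ B]
  exact_mod_cast (one_lt_div hpos).mp h

end Density

section OrderedGroup

variable {G : Type*} [Group G]

theorem one_mem_prodset (A B : Set G) : (1 : G) ∈ prodset A B :=
  ⟨1, Or.inr rfl, 1, Or.inr rfl, mul_one 1⟩

theorem subset_prodset_left (A B : Set G) : A ⊆ prodset A B :=
  fun a ha => ⟨a, Or.inl ha, 1, Or.inr rfl, mul_one a⟩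

theorem subset_prodset_right (A B : Set G) : B ⊆ prodset A B :=
  fun b hb => ⟨1, Or.inr rfl, b, Or.inl hb, one_mul b⟩

variable [PartialOrder G]

theorem prodset_subset_Ioi_union_one [MulLeftMono G] {A B : Set G} (hA : A ⊆ Ioi 1)
    (hB : B ⊆ Ioi 1) : prodset A B ⊆ Ioi 1 ∪ {1} := by
  have union_one_subset : ∀ {S : Set G}, S ⊆ Ioi 1 → S ∪ {1} ⊆ Ici 1 := fun hS => by
    rw [← Ioi_union_left]
    exact union_subset_union_left _ hS
  rintro _ ⟨a, ha, b, hb, rfl⟩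
  rw [Ioi_union_left]
  exact one_le_mul (union_one_subset hA ha) (union_one_subset hB hb)

theorem mul_inv_mem_Ioo_one [MulLeftMono G] [MulRightMono G] {g z : G} (hz : z ∈ Ioo 1 g) :
    g * z⁻¹ ∈ Ioo 1 g :=
  ⟨lt_mul_inv_iff_lt.mpr hz.2, mul_lt_of_lt_one_right' g (inv_lt_one'.mpr hz.1)⟩

theorem mem_prodset_of_ncard_Ioo_lt [MulLeftMono G] [MulRightMono G] {A B : Set G} {g : G}
    (hfin : (Ioo 1 g).Finite)
    (h : (Ioo 1 g).ncard < (A ∩ Ioo 1 g).ncard + (B ∩ Ioo 1 g).ncard) :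
    g ∈ prodset A B := by
  set reflect : G → G := fun z => g * z⁻¹
  have hreflect : (reflect '' (B ∩ Ioo 1 g)).ncard = (B ∩ Ioo 1 g).ncard :=
    ncard_image_of_injective _ ((mul_right_injective g).comp inv_injective)
  have hmaps : reflect '' (B ∩ Ioo 1 g) ⊆ Ioo 1 g :=
    image_subset_iff.mpr fun _ hz => mul_inv_mem_Ioo_one hz.2
  obtain ⟨a, ⟨ha, -⟩, b, ⟨hb, -⟩, rfl⟩ :=
    inter_nonempty_of_ncard_lt_ncard_add_ncard_s8 inter_subset_right hmaps hfin (hreflect ▸ h)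
  exact ⟨g * b⁻¹, Or.inl ha, b, Or.inl hb, inv_mul_cancel_right g b⟩

end OrderedGroup

/-- Let `H⁺` be the set of atoms of the positive cone `G⁺`, suppose
`(e, x) ∈ 𝒥` for every `x ∈ G⁺ \ H⁺`, and let `A, B ⊆ G⁺` with
`H⁺ ⊆ A ∪ B`. If `σ_𝒥(A) + σ_𝒥(B) > 1`, then `AB = G⁺ ∪ {e}`. -/
theorem prodset_eq_cone_of_one_lt_add_densJ
    {G : Type*} [Group G] [PartialOrder G]
    [CovariantClass G G (· * ·) (· ≤ ·)]
    [CovariantClass G G (Function.swap (· * ·)) (· ≤ ·)]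
    (𝒥 : Set (Set G))
    (h𝒥 : ∀ J ∈ 𝒥, J.Nonempty ∧ J.Finite ∧ J ⊆ Set.Ioi (1 : G))
    (hatoms : ∀ x ∈ Set.Ioi (1 : G) \ {y ∈ Set.Ioi (1 : G) | Set.Ioo (1 : G) y = ∅},
      Set.Ioo (1 : G) x ∈ 𝒥)
    (A B : Set G) (hA : A ⊆ Set.Ioi 1) (hB : B ⊆ Set.Ioi 1)
    (hAB : {y ∈ Set.Ioi (1 : G) | Set.Ioo (1 : G) y = ∅} ⊆ A ∪ B)
    (hd : 1 < densJ 𝒥 A + densJ 𝒥 B) :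
    prodset A B = Set.Ioi (1 : G) ∪ {1} := by
  refine (prodset_subset_Ioi_union_one hA hB).antisymm ?_
  rintro g (hg | rfl)
  · by_cases hatom : Ioo 1 g = ∅
    · rcases hAB ⟨hg, hatom⟩ with hgA | hgB
      exacts [subset_prodset_left A B hgA, subset_prodset_right A B hgB]
    · have hJ : Ioo 1 g ∈ 𝒥 := hatoms g ⟨hg, fun h => hatom h.2⟩
      obtain ⟨hne, hfin, -⟩ := h𝒥 _ hJ
      exact mem_prodset_of_ncard_Ioo_lt hfin
        (ncard_lt_ncard_inter_add_ncard_inter_of_one_lt_add_densJ hJ hne hfin hd)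
  · exact one_mem_prodset A B
end

section
/- Let G be a right partially ordered group (a ≤ b implies ac ≤ bc for all c) with identity e and positive cone G⁺ = {x ∈ G : x > e}. Let B be a nonempty subset of G⁺, and let J be a downward closed subset of G⁺ such that J* = J \ B is nonempty and, for all x ∈ J*, the set B*(x) = {b ∈ B : b < x} is nonempty and finite. Then there is a family {J_ℓ : ℓ ∈ L} of pairwise disjoint nonempty subsets of J* with J* = ⋃_{ℓ ∈ L} J_ℓ and, for each ℓ ∈ L, an element b_ℓ ∈ B such that J_ℓ b_ℓ^{-1} is a downward closed subset of G⁺. -/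
/-- A subset `S` of the positive cone `G⁺ = {x : 1 < x}` is downward closed if
`x ∈ S` implies `(e, x) ⊆ S`. -/
def DownwardClosed {G : Type*} [Group G] [PartialOrder G] (S : Set G) : Prop :=
  S ⊆ Set.Ioi 1 ∧ ∀ x ∈ S, Set.Ioo (1 : G) x ⊆ S

/-!
For `x ∈ J \ B` let `β x` be the largest element of the finite set `B ∩ (·, x)` for a fixed linear
extension of the order, and let the pieces be the fibres of `β`. If `β x < y < x`, then `y ∉ B`
and `β y = β x`, since `B ∩ (·, y) ⊆ B ∩ (·, x)` still contains `β x`, and `y` would beat `β x`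
in the linear extension. Right invariance turns this into downward closedness of
`{x : β x = ℓ} ℓ⁻¹`. Choosing the maximum for one linear order (rather than any maximal element)
is what makes `β` constant on these intervals.
-/

open Set

section MaxBelow

variable {α : Type*} [PartialOrder α] {B : Set α} {x y m : α}

theorem toLinearExtension_injective : Function.Injective (toLinearExtension : α →o LinearExtension α) :=
  fun _ _ h => h

theorem toLinearExtension_strictMono : StrictMono (toLinearExtension : α →o LinearExtension α) :=
  toLinearExtension.monotone.strictMono_of_injective toLinearExtension_injective

open Classical in
noncomputable def maxBelow (B : Set α) (x : α) : α :=
  if h : ∃ m ∈ B ∩ Iio x, ∀ a ∈ B ∩ Iio x, toLinearExtension a ≤ toLinearExtension m then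
    h.choose
  else x

theorem maxBelow_spec (hfin : (B ∩ Iio x).Finite) (hne : (B ∩ Iio x).Nonempty) :
    maxBelow B x ∈ B ∩ Iio x ∧
      ∀ a ∈ B ∩ Iio x, toLinearExtension a ≤ toLinearExtension (maxBelow B x) := by
  have h : ∃ m ∈ B ∩ Iio x, ∀ a ∈ B ∩ Iio x, toLinearExtension a ≤ toLinearExtension m := by
    obtain ⟨m, hm, hmax⟩ := hfin.exists_maximalFor toLinearExtension _ hne
    exact ⟨m, hm, fun a ha => (le_total _ _).elim id fun h => (hmax ha h).ge⟩
  rw [maxBelow, dif_pos h]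
  exact h.choose_spec

theorem maxBelow_eq (hm : m ∈ B ∩ Iio x)
    (hmax : ∀ a ∈ B ∩ Iio x, toLinearExtension a ≤ toLinearExtension m) : maxBelow B x = m := by
  have h : ∃ m ∈ B ∩ Iio x, ∀ a ∈ B ∩ Iio x, toLinearExtension a ≤ toLinearExtension m :=
    ⟨m, hm, hmax⟩
  rw [maxBelow, dif_pos h]
  exact toLinearExtension_injective <|
    le_antisymm (hmax _ h.choose_spec.1) (h.choose_spec.2 _ hm)

variable (hfin : (B ∩ Iio x).Finite) (hne : (B ∩ Iio x).Nonempty)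
include hfin hne

theorem notMem_of_maxBelow_lt (h₁ : maxBelow B x < y) (h₂ : y < x) : y ∉ B := fun hy =>
  (toLinearExtension_strictMono h₁).not_ge ((maxBelow_spec hfin hne).2 y ⟨hy, h₂⟩)

theorem maxBelow_eq_of_maxBelow_lt (h₁ : maxBelow B x < y) (h₂ : y < x) :
    maxBelow B y = maxBelow B x :=
  have hspec := maxBelow_spec hfin hne
  maxBelow_eq ⟨hspec.1.1, h₁⟩ fun a ha => hspec.2 a ⟨ha.1, ha.2.trans h₂⟩

end MaxBelow

theorem downwardClosed_fiber_maxBelow_mul_inv {G : Type*} [Group G] [PartialOrder G]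
    [MulRightMono G] {B J : Set G} (hBpos : B ⊆ Ioi 1) (hJ : DownwardClosed J)
    (hBx : ∀ x ∈ J \ B, (B ∩ Iio x).Nonempty ∧ (B ∩ Iio x).Finite) (ℓ : G) :
    DownwardClosed ((· * ℓ⁻¹) '' (J \ B ∩ maxBelow B ⁻¹' {ℓ})) := by
  rw [image_mul_right']
  have hmul {z : G} : 1 < z ↔ ℓ < z * ℓ := by
    rw [← mul_lt_mul_iff_right ℓ, one_mul]
  refine ⟨fun w ⟨hx, (hxℓ : maxBelow B (w * ℓ) = ℓ)⟩ => ?_,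
    fun w ⟨hx, (hxℓ : maxBelow B (w * ℓ) = ℓ)⟩ z hz => ?_⟩
  all_goals
    obtain ⟨hne, hfin⟩ := hBx _ hx
    obtain ⟨⟨hℓB, hℓx⟩, -⟩ := maxBelow_spec hfin hne
    rw [hxℓ] at hℓB hℓx
  · exact hmul.2 hℓx
  · have hℓz : maxBelow B (w * ℓ) < z * ℓ := by
      rw [hxℓ]; exact hmul.1 hz.1
    have hzx : z * ℓ < w * ℓ := mul_lt_mul_left hz.2 ℓ
    have hzJ : z * ℓ ∈ J := hJ.2 _ hx.1 ⟨(hBpos hℓB).trans (hmul.1 hz.1), hzx⟩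
    refine ⟨⟨hzJ, notMem_of_maxBelow_lt hfin hne hℓz hzx⟩, ?_⟩
    exact (maxBelow_eq_of_maxBelow_lt hfin hne hℓz hzx).trans hxℓ

theorem partition_right_ordered_general
    {G : Type*} [Group G] [PartialOrder G]
    [CovariantClass G G (Function.swap (· * ·)) (· ≤ ·)]
    (B J : Set G) (hBpos : B ⊆ Set.Ioi 1)
    (hJ : DownwardClosed J)
    (hBx : ∀ x ∈ J \ B, (B ∩ Set.Iio x).Nonempty ∧ (B ∩ Set.Iio x).Finite) :
    ∃ (L : Set G) (Jfam : G → Set G) (b : G → G),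
      (∀ ℓ ∈ L, (Jfam ℓ).Nonempty ∧ Jfam ℓ ⊆ J \ B) ∧
      (L.Pairwise fun ℓ₁ ℓ₂ => Disjoint (Jfam ℓ₁) (Jfam ℓ₂)) ∧
      (⋃ ℓ ∈ L, Jfam ℓ) = J \ B ∧
      (∀ ℓ ∈ L, b ℓ ∈ B ∧ DownwardClosed ((fun y => y * (b ℓ)⁻¹) '' Jfam ℓ)) := by
  refine ⟨maxBelow B '' (J \ B), fun ℓ => J \ B ∩ maxBelow B ⁻¹' {ℓ}, id, ?_, ?_, ?_, ?_⟩
  · rintro _ ⟨x, hx, rfl⟩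
    exact ⟨⟨x, hx, rfl⟩, inter_subset_left⟩
  · exact (pairwiseDisjoint_fiber (maxBelow B) _).mono_on fun _ _ => inter_subset_right
  · rw [biUnion_image]
    exact (iUnion₂_subset fun _ _ => inter_subset_left).antisymm fun x hx =>
      mem_biUnion hx ⟨hx, rfl⟩
  · rintro _ ⟨x, hx, rfl⟩
    exact ⟨(maxBelow_spec (hBx x hx).2 (hBx x hx).1).1.1,
      downwardClosed_fiber_maxBelow_mul_inv hBpos hJ hBx _⟩

/-- Partition theorem for right partially ordered groups: `J* = J \ B`
decomposes into pairwise disjoint nonempty pieces `J_ℓ`, each with a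
`b_ℓ ∈ B` such that `J_ℓ b_ℓ⁻¹` is a downward closed subset of `G⁺`. -/
theorem partition_right_ordered
    {G : Type*} [Group G] [PartialOrder G]
    [CovariantClass G G (Function.swap (· * ·)) (· ≤ ·)]
    (B J : Set G) (hBne : B.Nonempty) (hBpos : B ⊆ Set.Ioi 1)
    (hJ : DownwardClosed J) (hJstar : (J \ B).Nonempty)
    (hBx : ∀ x ∈ J \ B, (B ∩ Set.Iio x).Nonempty ∧ (B ∩ Set.Iio x).Finite) :
    ∃ (L : Set G) (Jfam : G → Set G) (b : G → G),
      (∀ ℓ ∈ L, (Jfam ℓ).Nonempty ∧ Jfam ℓ ⊆ J \ B) ∧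
      (L.Pairwise fun ℓ₁ ℓ₂ => Disjoint (Jfam ℓ₁) (Jfam ℓ₂)) ∧
      (⋃ ℓ ∈ L, Jfam ℓ) = J \ B ∧
      (∀ ℓ ∈ L, b ℓ ∈ B ∧ DownwardClosed ((fun y => y * (b ℓ)⁻¹) '' Jfam ℓ)) :=
  partition_right_ordered_general B J hBpos hJ hBx
end

section
/- Let G be a partially ordered group with identity e and positive cone G⁺ = {x ∈ G : x > e}, and let 𝒥 be the set of all downward closed nonempty finite subsets of G⁺, with associated density σ_𝒥. For h ≥ 2, let A₁, …, A_h be subsets of G⁺ with σ_𝒥(A_i) = α_i for all i. Suppose that for every J ∈ 𝒥, every i ∈ {1, …, h}, and every x ∈ J \ A_i, the set A_i*(x) = {a ∈ A_i : a < x} is nonempty and finite. Then 1 − σ_𝒥(A₁⋯A_h) ≤ ∏_{i=1}^h (1 − α_i). -/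
/-- The collection of all downward closed nonempty finite subsets of the
positive cone of `G`. -/
def goodJ (G : Type*) [Group G] [PartialOrder G] : Set (Set G) :=
  {J | J.Nonempty ∧ J.Finite ∧ DownwardClosed J}

/-- The product `A₁ ⋯ A_h = {a₁ ⋯ a_h : aᵢ ∈ Aᵢ ∪ {e}}` of a family of
subsets of a (possibly noncommutative) group. -/
def prodFam {G : Type*} [Group G] {h : ℕ} (A : Fin h → Set G) : Set G :=
  {g | ∃ f : Fin h → G, (∀ i, f i ∈ A i ∪ {1}) ∧ (List.ofFn f).prod = g}

/-!
Schnirelmann's argument. For `x ∈ J \ A` let `φ x` be the element of `A ∩ (e, x)` that is largest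
in a fixed linear extension of the order. Then `φ` is constant on `(φ x, x)`, which avoids `A`,
so the fibre of `φ` over `a`, translated by `a⁻¹`, again lies in `𝒥`. An element `a y` of that
fibre with `y ∈ B` lies in `(A ∪ {1}) B`; hence if `|K \ B| ≤ γ |K|` for every `K ∈ 𝒥`, at most `γ`
times the size of each fibre misses `(A ∪ {1}) B`. Summing over the fibres gives
`|J \ (A ∪ {1}) B| ≤ γ |J \ A| ≤ γ (1 - σ(A)) |J|`, and induction on `h` with `B = A₂ ⋯ A_h`
finishes.
-/

open Set Pointwise

theorem ncard_le_mul_of_ncard_fiber_le {ι M : Type*} {s t : Set ι} (hs : s.Finite) (hts : t ⊆ s)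
    (f : ι → M) {γ : ℝ}
    (h : ∀ b, ((t ∩ f ⁻¹' {b}).ncard : ℝ) ≤ γ * (s ∩ f ⁻¹' {b}).ncard) :
    (t.ncard : ℝ) ≤ γ * s.ncard := by
  classical
  lift s to Finset ι using hs
  lift t to Finset ι using s.finite_toSet.subset hts
  have hfiber (u : Finset ι) (b : M) :
      ((u : Set ι) ∩ f ⁻¹' {b}).ncard = (u.filter (f · = b)).card := by
    rw [← ncard_coe_finset, Finset.coe_filter]
    rfl
  have hmaps : ∀ u ⊆ s, (u : Set ι).MapsTo f (s.image f) :=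
    fun u hu x hx => Finset.mem_image_of_mem f (hu hx)
  rw [ncard_coe_finset, ncard_coe_finset,
    Finset.card_eq_sum_card_fiberwise (hmaps t (by exact_mod_cast hts)),
    Finset.card_eq_sum_card_fiberwise (hmaps s subset_rfl)]
  push_cast
  rw [Finset.mul_sum]
  exact Finset.sum_le_sum fun b _ => by simpa only [hfiber] using h b

theorem exists_coherent_choice_below {α : Type*} [PartialOrder α] (A : Set α) :
    ∃ φ : α → α, ∀ x, (A ∩ Iio x).Nonempty → (A ∩ Iio x).Finite →
      φ x ∈ A ∧ φ x < x ∧ ∀ y ∈ Ioo (φ x) x, y ∉ A ∧ φ y = φ x := by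
  let L : α →o LinearExtension α := toLinearExtension
  have hLinj : Function.Injective L := fun _ _ h => h
  have hL : StrictMono L := L.monotone.strictMono_of_injective hLinj
  have hmax : ∀ x, (A ∩ Iio x).Nonempty → (A ∩ Iio x).Finite →
      ∃ a ∈ A ∩ Iio x, ∀ b ∈ A ∩ Iio x, L b ≤ L a :=
    fun x hne hfin => exists_max_image _ L hfin hne
  choose! φ hφA hφmax using hmax
  refine ⟨φ, fun x hne hfin => ⟨(hφA x hne hfin).1, (hφA x hne hfin).2, fun y ⟨hxy, hyx⟩ => ?_⟩⟩
  have hsub : A ∩ Iio y ⊆ A ∩ Iio x := fun b hb => ⟨hb.1, hb.2.trans hyx⟩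
  have hxy' : φ x ∈ A ∩ Iio y := ⟨(hφA x hne hfin).1, hxy⟩
  have hyA : y ∉ A := fun hyA => (hL hxy).not_ge (hφmax x hne hfin y ⟨hyA, hyx⟩)
  have hfin' := hfin.subset hsub
  exact ⟨hyA, hLinj <| le_antisymm (hφmax x hne hfin _ (hsub (hφA y ⟨_, hxy'⟩ hfin')))
    (hφmax y ⟨_, hxy'⟩ hfin' _ hxy')⟩

section Density

variable {X : Type*} {𝒥 : Set (Set X)} {A J : Set X}

theorem densJ_le_ratio (hJ : J ∈ 𝒥) : densJ 𝒥 A ≤ (A ∩ J).ncard / J.ncard :=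
  csInf_le ⟨0, by rintro _ ⟨K, -, rfl⟩; positivity⟩ ⟨J, hJ, rfl⟩

theorem densJ_le_one : densJ 𝒥 A ≤ 1 := by
  rcases 𝒥.eq_empty_or_nonempty with h𝒥 | ⟨J, hJ⟩
  · simp [densJ, h𝒥]
  refine (densJ_le_ratio hJ).trans ?_
  rcases J.finite_or_infinite with hJfin | hJinf
  · exact div_le_one_of_le₀ (by exact_mod_cast ncard_le_ncard inter_subset_right hJfin)
      (Nat.cast_nonneg _)
  · simp [hJinf.ncard]

theorem ncard_inter_add_ncard_diff_of_ncard_pos (hJ : 0 < J.ncard) :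
    ((A ∩ J).ncard : ℝ) + (J \ A).ncard = J.ncard := by
  rw [inter_comm]
  exact_mod_cast ncard_inter_add_ncard_sdiff_eq_ncard J A (finite_of_ncard_pos hJ)

theorem ncard_diff_le_one_sub_densJ_mul (hJ : J ∈ 𝒥) (hpos : 0 < J.ncard) :
    ((J \ A).ncard : ℝ) ≤ (1 - densJ 𝒥 A) * J.ncard := by
  have h := densJ_le_ratio (A := A) hJ
  rw [le_div_iff₀ (by exact_mod_cast hpos)] at h
  linarith [ncard_inter_add_ncard_diff_of_ncard_pos (A := A) hpos]

theorem one_sub_le_densJ {c : ℝ} (h𝒥 : 𝒥.Nonempty) (hpos : ∀ J ∈ 𝒥, 0 < J.ncard)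
    (h : ∀ J ∈ 𝒥, ((J \ A).ncard : ℝ) ≤ c * J.ncard) : 1 - c ≤ densJ 𝒥 A := by
  refine le_csInf (h𝒥.image _) ?_
  rintro _ ⟨J, hJ, rfl⟩
  rw [le_div_iff₀ (by exact_mod_cast hpos J hJ)]
  linarith [ncard_inter_add_ncard_diff_of_ncard_pos (A := A) (hpos J hJ), h J hJ]

end Density

section ProdFam

variable {G : Type*} [Group G]

theorem prodFam_zero (A : Fin 0 → Set G) : prodFam A = {1} := by
  ext g
  simp only [prodFam, List.ofFn_zero, List.prod_nil, mem_singleton_iff]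
  exact ⟨fun ⟨_, _, hg⟩ => hg.symm, fun hg => ⟨Fin.elim0, fun i => i.elim0, hg.symm⟩⟩

theorem one_mem_prodFam {n : ℕ} (A : Fin n → Set G) : (1 : G) ∈ prodFam A :=
  ⟨fun _ => 1, fun _ => mem_union_right _ rfl, by simp⟩

theorem prodFam_succ {n : ℕ} (A : Fin (n + 1) → Set G) :
    prodFam A = (A 0 ∪ {1}) * prodFam (fun i : Fin n => A i.succ) := by
  ext g
  constructor
  · rintro ⟨f, hf, rfl⟩
    rw [List.ofFn_succ, List.prod_cons]
    exact mul_mem_mul (hf 0) ⟨fun i => f i.succ, fun i => hf i.succ, rfl⟩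
  · rintro ⟨a, ha, _, ⟨f, hf, rfl⟩, rfl⟩
    refine ⟨Fin.cons a f, Fin.cases ha hf, ?_⟩
    simp [List.ofFn_succ]

end ProdFam

theorem ncard_pos_of_mem_goodJ {G : Type*} [Group G] [PartialOrder G] {J : Set G}
    (hJ : J ∈ goodJ G) : 0 < J.ncard :=
  (ncard_pos hJ.2.1).2 hJ.1

section OrderedGroup

variable {G : Type*} [Group G] [PartialOrder G] [MulLeftMono G]

theorem preimage_mul_fiber_mem_goodJ {A J : Set G} {φ : G → G} {a : G} (hJ : J ∈ goodJ G)
    (hA : A ⊆ Ioi 1)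
    (hφ : ∀ x ∈ J \ A, φ x ∈ A ∧ φ x < x ∧ ∀ y ∈ Ioo (φ x) x, y ∉ A ∧ φ y = φ x)
    (hne : (J \ A ∩ φ ⁻¹' {a}).Nonempty) :
    (a * ·) ⁻¹' (J \ A ∩ φ ⁻¹' {a}) ∈ goodJ G := by
  obtain ⟨-, hJfin, -, hJdc⟩ := hJ
  have hpos : ∀ y ∈ (a * ·) ⁻¹' (J \ A ∩ φ ⁻¹' {a}), 1 < y := by
    rintro y ⟨hy, hφy : φ (a * y) = a⟩
    simpa [hφy] using (hφ _ hy).2.1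
  refine ⟨?_, hJfin.preimage (mul_right_injective a).injOn |>.subset fun _ hy => hy.1.1, hpos, ?_⟩
  · obtain ⟨x, hx⟩ := hne
    exact ⟨a⁻¹ * x, by simpa using hx⟩
  rintro y hyK z ⟨hz1, hzy⟩
  obtain ⟨hy, hφy : φ (a * y) = a⟩ := hyK
  have hbetween : a * z ∈ Ioo (φ (a * y)) (a * y) :=
    ⟨by simpa [hφy] using hz1, mul_lt_mul_right hzy a⟩
  have ha1 : 1 < a := hφy ▸ hA (hφ _ hy).1
  obtain ⟨hzA, hφz⟩ := (hφ _ hy).2.2 _ hbetween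
  exact ⟨⟨hJdc _ hy.1 ⟨ha1.trans (by simpa using hz1), hbetween.2⟩, hzA⟩, hφz.trans hφy⟩

theorem ncard_diff_union_one_mul_le {A B J : Set G} {γ : ℝ} (hA : A ⊆ Ioi 1) (hB : 1 ∈ B)
    (hBJ : ∀ K ∈ goodJ G, ((K \ B).ncard : ℝ) ≤ γ * K.ncard) (hJ : J ∈ goodJ G)
    (hAJ : ∀ x ∈ J \ A, (A ∩ Iio x).Nonempty ∧ (A ∩ Iio x).Finite) :
    ((J \ ((A ∪ {1}) * B)).ncard : ℝ) ≤ γ * (J \ A).ncard := by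
  obtain ⟨φ, hφ⟩ := exists_coherent_choice_below A
  replace hφ : ∀ x ∈ J \ A, _ := fun x hx => hφ x (hAJ x hx).1 (hAJ x hx).2
  have hsub : J \ ((A ∪ {1}) * B) ⊆ J \ A :=
    sdiff_subset_sdiff_right <| subset_union_left.trans (subset_mul_left _ hB)
  refine ncard_le_mul_of_ncard_fiber_le hJ.2.1.sdiff hsub φ fun a => ?_
  set F := J \ A ∩ φ ⁻¹' {a}
  set W := J \ ((A ∪ {1}) * B) ∩ φ ⁻¹' {a}
  have hWF : W ⊆ F := inter_subset_inter_left _ hsub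
  rcases F.eq_empty_or_nonempty with hF | hF
  · simp [hF, subset_empty_iff.1 (hF ▸ hWF)]
  have hK : (a * ·) ⁻¹' F ∈ goodJ G := preimage_mul_fiber_mem_goodJ hJ hA hφ hF
  have hncard (S : Set G) : ((a * ·) ⁻¹' S).ncard = S.ncard :=
    ncard_preimage_of_injective_subset_range (mul_right_injective a)
      (by simp [(mul_left_surjective a).range_eq])
  have hWK : (a * ·) ⁻¹' W ⊆ (a * ·) ⁻¹' F \ B := by
    rintro y ⟨hyW, hφy : φ (a * y) = a⟩
    have haA : a ∈ A := hφy ▸ (hφ _ (hsub hyW)).1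
    exact ⟨hWF ⟨hyW, hφy⟩, fun hyB => hyW.2 ⟨a, Or.inl haA, y, hyB, rfl⟩⟩
  calc (W.ncard : ℝ) = ((a * ·) ⁻¹' W).ncard := by rw [hncard]
    _ ≤ ((a * ·) ⁻¹' F \ B).ncard := by exact_mod_cast ncard_le_ncard hWK hK.2.1.sdiff
    _ ≤ γ * ((a * ·) ⁻¹' F).ncard := hBJ _ hK
    _ = γ * F.ncard := by rw [hncard]

theorem ncard_diff_prodFam_le {n : ℕ} (A : Fin n → Set G) (hA : ∀ i, A i ⊆ Ioi 1)
    {β : Fin n → ℝ} (hβ : ∀ i, 0 ≤ β i)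
    (hAβ : ∀ i, ∀ J ∈ goodJ G, ((J \ A i).ncard : ℝ) ≤ β i * J.ncard)
    (hAx : ∀ J ∈ goodJ G, ∀ i, ∀ x ∈ J \ A i,
      (A i ∩ Iio x).Nonempty ∧ (A i ∩ Iio x).Finite) :
    ∀ J ∈ goodJ G, ((J \ prodFam A).ncard : ℝ) ≤ (∏ i, β i) * J.ncard := by
  induction n with
  | zero =>
    intro J hJ
    have h1 : (1 : G) ∉ J := fun h => lt_irrefl _ (hJ.2.2.1 h)
    simp [prodFam_zero, h1]
  | succ n ih =>
    intro J hJ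
    have htail := ih (fun i => A i.succ) (fun i => hA i.succ) (fun i => hβ i.succ)
      (fun i => hAβ i.succ) (fun J hJ i => hAx J hJ i.succ)
    rw [prodFam_succ, Fin.prod_univ_succ, mul_comm (β 0), mul_assoc]
    calc _ ≤ (∏ i : Fin n, β i.succ) * (J \ A 0).ncard :=
          ncard_diff_union_one_mul_le (hA 0) (one_mem_prodFam _) htail hJ (hAx J hJ 0)
      _ ≤ _ := mul_le_mul_of_nonneg_left (hAβ 0 J hJ) (Finset.prod_nonneg fun i _ => hβ i.succ)

end OrderedGroup

theorem one_sub_densJ_prodFam_le_general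
    {G : Type*} [Group G] [PartialOrder G]
    [CovariantClass G G (· * ·) (· ≤ ·)]
    (h : ℕ) (A : Fin h → Set G)
    (hA : ∀ i, A i ⊆ Set.Ioi (1 : G))
    (α : Fin h → ℝ) (hα : ∀ i, densJ (goodJ G) (A i) = α i)
    (hAx : ∀ J ∈ goodJ G, ∀ i, ∀ x ∈ J \ A i,
      (A i ∩ Set.Iio x).Nonempty ∧ (A i ∩ Set.Iio x).Finite) :
    1 - densJ (goodJ G) (prodFam A) ≤ ∏ i, (1 - α i) := by
  obtain rfl : α = fun i => densJ (goodJ G) (A i) := funext fun i => (hα i).symm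
  rcases (goodJ G).eq_empty_or_nonempty with hempty | hne
  · simp [densJ, hempty]
  refine sub_le_comm.1 <| one_sub_le_densJ hne (fun J hJ => ncard_pos_of_mem_goodJ hJ) <|
    ncard_diff_prodFam_le A hA (fun i => sub_nonneg.2 densJ_le_one)
      (fun i J hJ => ncard_diff_le_one_sub_densJ_mul hJ (ncard_pos_of_mem_goodJ hJ)) hAx

/-- In a partially ordered group, `1 - σ_𝒥(A₁ ⋯ A_h) ≤ ∏ᵢ (1 - αᵢ)`. -/
theorem one_sub_densJ_prodFam_le
    {G : Type*} [Group G] [PartialOrder G]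
    [CovariantClass G G (· * ·) (· ≤ ·)]
    [CovariantClass G G (Function.swap (· * ·)) (· ≤ ·)]
    (h : ℕ) (hh : 2 ≤ h) (A : Fin h → Set G)
    (hA : ∀ i, A i ⊆ Set.Ioi (1 : G))
    (α : Fin h → ℝ) (hα : ∀ i, densJ (goodJ G) (A i) = α i)
    (hAx : ∀ J ∈ goodJ G, ∀ i, ∀ x ∈ J \ A i,
      (A i ∩ Set.Iio x).Nonempty ∧ (A i ∩ Set.Iio x).Finite) :
    1 - densJ (goodJ G) (prodFam A) ≤ ∏ i, (1 - α i) :=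
  one_sub_densJ_prodFam_le_general h A hA α hα hAx
end
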